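/- arXiv:2505.20172 — 5 statements merged into one kernel-verified Lean document; each statement's English description precedes it below -/
import Mathlib

section
/- There exists a function t(λ) > 0 with lim_{λ→0⁺} t(λ) = 0 such that lim_{λ→0⁺} w̃^λ(t(λ)) = w^GF_∞, where w̃^λ(t) := w^λ(t/λ) is the time-rescaled regularised flow and w^GF_∞ = lim_{t→∞} w^GF(t). (One may take t(λ) of order −λ ln λ.) -/
/-!
Let `u` be the gradient flow, bounded by `R`, and `x` the regularised flow with the same initial
point. As long as `‖x - u‖ ≤ 1`, both stay in the ball of radius `R + 1`, on which `∇F` is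
`K`-Lipschitz, and `x` solves the gradient flow equation up to the error `λ x`, of norm at most
`λ (R + 1)`. Grönwall then gives `‖x t - u t‖ ≤ λ (R + 1) (exp (K t) - 1) / K`, and a continuity
argument removes the proviso `‖x - u‖ ≤ 1` as long as this bound stays below `1`. At the time
`s = log (1 + λ^(-1/2)) / K` the bound is `(R + 1) √λ / K`, while `s → ∞` and `λ s ≤ √λ / K`;
so `t(λ) = λ s` works: `x s` is close to `u s`, which is close to `lim u`.
-/

open Set Filter Topology Metric
open scoped NNReal

theorem ContDiff.locallyLipschitz_gradient {E : Type*} [NormedAddCommGroup E]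
    [InnerProductSpace ℝ E] [CompleteSpace E] {F : E → ℝ} (hF : ContDiff ℝ 2 F) :
    LocallyLipschitz (gradient F) := by
  have hfderiv : ContDiff ℝ 1 (fderiv ℝ F) := hF.fderiv_right (by norm_num)
  exact ((InnerProductSpace.toDual ℝ E).symm.contDiff.comp hfderiv).locallyLipschitz

theorem forall_lt_of_continuousOn_of_forall_Ico_le {α β : Type*}
    [ConditionallyCompleteLinearOrder α] [TopologicalSpace α] [OrderTopology α]
    [LinearOrder β] [TopologicalSpace β] [ClosedIciTopology β]
    {g : α → β} {a b : α} {c : β} (hg : ContinuousOn g (Icc a b))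
    (h : ∀ t ∈ Icc a b, (∀ u ∈ Ico a t, g u ≤ c) → g t < c) :
    ∀ t ∈ Icc a b, g t < c := by
  by_contra! ⟨t, ht, hct⟩
  set Z := Icc a b ∩ g ⁻¹' Ici c
  have hZ : IsClosed Z := hg.preimage_isClosed_of_isClosed isClosed_Icc isClosed_Ici
  have hZbdd : BddBelow Z := ⟨a, fun x hx => hx.1.1⟩
  have hT : sInf Z ∈ Z := hZ.csInf_mem ⟨t, ht, hct⟩ hZbdd
  refine (h _ hT.1 fun u hu => ?_).not_ge hT.2
  by_contra! hcu
  exact (csInf_le hZbdd ⟨⟨hu.1, hu.2.le.trans hT.1.2⟩, hcu.le⟩).not_gt hu.2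

theorem gronwallBound_zero_log_one_add_inv_sqrt {K c lam : ℝ} (hK : K ≠ 0) :
    gronwallBound 0 K (lam * c) (Real.log (1 + (√lam)⁻¹) / K) = c / K * √lam := by
  have hexp : Real.exp (K * (Real.log (1 + (√lam)⁻¹) / K)) = 1 + (√lam)⁻¹ := by
    rw [mul_div_cancel₀ _ hK, Real.exp_log (by positivity)]
  rw [gronwallBound_of_K_ne_0 hK]
  dsimp only
  rw [hexp]
  calc 0 * (1 + (√lam)⁻¹) + lam * c / K * (1 + (√lam)⁻¹ - 1) = c / K * (lam / √lam) := by ring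
    _ = c / K * √lam := by rw [Real.div_sqrt]

section PerturbedFlow

variable {E : Type*} [NormedAddCommGroup E] [NormedSpace ℝ E]
  {v : E → E} {K : ℝ≥0} {R lam : ℝ} {u x : ℝ → E}

theorem norm_sub_le_gronwallBound_of_forall_norm_sub_le_one
    (hv : LipschitzOnWith K v (closedBall 0 (R + 1)))
    (hu : ∀ t, 0 ≤ t → HasDerivAt u (v (u t)) t) (huR : ∀ t, 0 ≤ t → ‖u t‖ ≤ R)
    (hx : ∀ t, 0 ≤ t → HasDerivAt x (v (x t) - lam • x t) t) (hx0 : x 0 = u 0)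
    (hlam : 0 ≤ lam) {m : ℝ} (hclose : ∀ t ∈ Ico 0 m, ‖x t - u t‖ ≤ 1) :
    ∀ t ∈ Icc 0 m, ‖x t - u t‖ ≤ gronwallBound 0 K (lam * (R + 1)) t := by
  have hxR : ∀ t ∈ Ico 0 m, ‖x t‖ ≤ R + 1 := fun t ht => by
    calc ‖x t‖ = ‖(x t - u t) + u t‖ := by rw [sub_add_cancel]
      _ ≤ 1 + R := (norm_add_le _ _).trans (add_le_add (hclose t ht) (huR t ht.1))
      _ = R + 1 := add_comm _ _
  intro t ht
  have := dist_le_of_approx_trajectories_ODE_of_mem (v := fun _ => v)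
    (s := fun _ => closedBall 0 (R + 1)) (fun _ _ => hv)
    (fun t ht => (hx t ht.1).continuousAt.continuousWithinAt)
    (fun t ht => (hx t ht.1).hasDerivWithinAt) (εf := lam * (R + 1)) (fun t ht => ?_)
    (fun t ht => mem_closedBall_zero_iff.2 (hxR t ht))
    (fun t ht => (hu t ht.1).continuousAt.continuousWithinAt)
    (fun t ht => (hu t ht.1).hasDerivWithinAt) (fun t _ => (dist_self _).le)
    (fun t ht => mem_closedBall_zero_iff.2 ((huR t ht.1).trans (by linarith)))
    (δ := 0) (by rw [hx0, dist_self]) t ht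
  · simpa [dist_eq_norm] using this
  · rw [dist_eq_norm, sub_sub_cancel_left, norm_neg, norm_smul, Real.norm_of_nonneg hlam]
    exact mul_le_mul_of_nonneg_left (hxR t ht) hlam

theorem norm_sub_le_gronwallBound_of_perturbed_flow
    (hv : LipschitzOnWith K v (closedBall 0 (R + 1)))
    (hu : ∀ t, 0 ≤ t → HasDerivAt u (v (u t)) t) (huR : ∀ t, 0 ≤ t → ‖u t‖ ≤ R)
    (hx : ∀ t, 0 ≤ t → HasDerivAt x (v (x t) - lam • x t) t) (hx0 : x 0 = u 0)
    (hlam : 0 ≤ lam) {b : ℝ} (hb : gronwallBound 0 K (lam * (R + 1)) b < 1) :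
    ∀ t ∈ Icc 0 b, ‖x t - u t‖ ≤ gronwallBound 0 K (lam * (R + 1)) t := by
  have hR : 0 ≤ R := (norm_nonneg _).trans (huR 0 le_rfl)
  have hmono := gronwallBound_mono le_rfl (by positivity) K.coe_nonneg (ε := lam * (R + 1))
  have hclose : ∀ t ∈ Icc 0 b, ‖x t - u t‖ < 1 := by
    refine forall_lt_of_continuousOn_of_forall_Ico_le (fun t ht => ?_) fun t ht hle => ?_
    · exact ((hx t ht.1).continuousAt.sub (hu t ht.1).continuousAt).norm.continuousWithinAt
    · calc ‖x t - u t‖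
          ≤ gronwallBound 0 K (lam * (R + 1)) t :=
            norm_sub_le_gronwallBound_of_forall_norm_sub_le_one hv hu huR hx hx0 hlam hle t
              ⟨ht.1, le_rfl⟩
        _ ≤ gronwallBound 0 K (lam * (R + 1)) b := hmono ht.2
        _ < 1 := hb
  exact norm_sub_le_gronwallBound_of_forall_norm_sub_le_one hv hu huR hx hx0 hlam
    fun t ht => (hclose t (Ico_subset_Icc_self ht)).le

theorem norm_sub_le_sqrt_of_perturbed_flow (hK : 0 < K)
    (hv : LipschitzOnWith K v (closedBall 0 (R + 1)))
    (hu : ∀ t, 0 ≤ t → HasDerivAt u (v (u t)) t) (huR : ∀ t, 0 ≤ t → ‖u t‖ ≤ R)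
    (hx : ∀ t, 0 ≤ t → HasDerivAt x (v (x t) - lam • x t) t) (hx0 : x 0 = u 0)
    (hlam : 0 ≤ lam) (hsmall : (R + 1) / K * √lam < 1) :
    ‖x (Real.log (1 + (√lam)⁻¹) / K) - u (Real.log (1 + (√lam)⁻¹) / K)‖ ≤
      (R + 1) / K * √lam := by
  have hb := gronwallBound_zero_log_one_add_inv_sqrt (K := K) (c := R + 1) (lam := lam)
    (NNReal.coe_ne_zero.2 hK.ne')
  rw [← hb] at hsmall ⊢
  exact norm_sub_le_gronwallBound_of_perturbed_flow hv hu huR hx hx0 hlam hsmall _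
    ⟨div_nonneg (Real.log_nonneg (by simp)) K.coe_nonneg, le_rfl⟩

end PerturbedFlow

theorem tendsto_log_one_add_inv_sqrt_nhdsGT_zero :
    Tendsto (fun lam : ℝ => Real.log (1 + (√lam)⁻¹)) (𝓝[>] 0) atTop := by
  have : Tendsto (fun lam : ℝ => √lam⁻¹) (𝓝[>] 0) atTop :=
    Real.tendsto_sqrt_atTop.comp tendsto_inv_nhdsGT_zero
  refine Real.tendsto_log_atTop.comp (tendsto_atTop_add_const_left _ 1 ?_)
  simpa only [Real.sqrt_inv] using this

theorem tendsto_mul_log_one_add_inv_sqrt_nhdsGT_zero :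
    Tendsto (fun lam : ℝ => lam * Real.log (1 + (√lam)⁻¹)) (𝓝[>] 0) (𝓝 0) := by
  have hsqrt : Tendsto (fun lam : ℝ => √lam) (𝓝[>] 0) (𝓝 0) := by
    simpa using (Real.continuous_sqrt.tendsto 0).mono_left nhdsWithin_le_nhds
  refine squeeze_zero' ?_ ?_ hsqrt <;> filter_upwards [self_mem_nhdsWithin] with lam hlam
  · exact mul_nonneg hlam.out.le (Real.log_nonneg (by simp))
  · calc lam * Real.log (1 + (√lam)⁻¹) ≤ lam * (√lam)⁻¹ := by
          refine mul_le_mul_of_nonneg_left ?_ hlam.out.le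
          linarith [Real.log_le_sub_one_of_pos (x := 1 + (√lam)⁻¹) (by positivity)]
      _ = √lam := Real.div_sqrt

theorem junction_lemma_general
    {d : ℕ} (F : EuclideanSpace ℝ (Fin d) → ℝ)
    (hF : ContDiff ℝ 3 F)
    (w₀ : EuclideanSpace ℝ (Fin d))
    (w : ℝ → ℝ → EuclideanSpace ℝ (Fin d))
    (hw0 : ∀ lam : ℝ, 0 < lam → w lam 0 = w₀)
    (hwode : ∀ lam : ℝ, 0 < lam → ∀ t : ℝ, 0 ≤ t →
      HasDerivAt (w lam) (-gradient F (w lam t) - lam • w lam t) t)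
    (wGF : ℝ → EuclideanSpace ℝ (Fin d))
    (hgf0 : wGF 0 = w₀)
    (hgfode : ∀ t : ℝ, 0 ≤ t → HasDerivAt wGF (-gradient F (wGF t)) t)
    (hbdd : Bornology.IsBounded (wGF '' Set.Ici (0 : ℝ)))
    (winf : EuclideanSpace ℝ (Fin d))
    (hwinf : Tendsto wGF atTop (𝓝 winf)) :
    ∃ tfun : ℝ → ℝ,
      (∀ lam : ℝ, 0 < lam → 0 < tfun lam) ∧
      Tendsto tfun (𝓝[>] (0 : ℝ)) (𝓝 0) ∧
      Tendsto (fun lam : ℝ => w lam (tfun lam / lam)) (𝓝[>] (0 : ℝ)) (𝓝 winf) := by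
  obtain ⟨R, hR⟩ := hbdd.subset_closedBall 0
  have hwGF_le : ∀ t, 0 ≤ t → ‖wGF t‖ ≤ R := fun t ht =>
    mem_closedBall_zero_iff.1 (hR ⟨t, ht, rfl⟩)
  obtain ⟨K, hK⟩ := ((hF.of_le (by norm_num)).locallyLipschitz_gradient.neg.locallyLipschitzOn
    ).exists_lipschitzOnWith_of_compact (isCompact_closedBall 0 (R + 1))
  set s : ℝ → ℝ := fun lam => Real.log (1 + (√lam)⁻¹) / ↑(K + 1)
  have hsqrt : Tendsto (fun lam : ℝ => (R + 1) / ↑(K + 1) * √lam) (𝓝[>] 0) (𝓝 0) := by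
    simpa using ((Real.continuous_sqrt.tendsto 0).const_mul _).mono_left nhdsWithin_le_nhds
  have hclose : Tendsto (fun lam => w lam (s lam) - wGF (s lam)) (𝓝[>] 0) (𝓝 0) := by
    refine squeeze_zero_norm' ?_ hsqrt
    filter_upwards [self_mem_nhdsWithin, hsqrt.eventually (eventually_lt_nhds one_pos)]
      with lam hlam hsmall
    refine norm_sub_le_sqrt_of_perturbed_flow (by positivity) (hK.weaken le_self_add) hgfode
      hwGF_le ?_ (by rw [hw0 lam hlam, hgf0]) hlam.out.le hsmall
    simpa only [Pi.neg_apply] using hwode lam hlam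
  have hs : Tendsto s (𝓝[>] 0) atTop :=
    tendsto_log_one_add_inv_sqrt_nhdsGT_zero.atTop_div_const (by positivity)
  refine ⟨fun lam => lam * s lam, fun lam hlam => ?_, ?_, ?_⟩
  · exact mul_pos hlam (div_pos (Real.log_pos (by simpa using hlam)) (by positivity))
  · simpa [s, mul_div_assoc] using
      tendsto_mul_log_one_add_inv_sqrt_nhdsGT_zero.div_const (K + 1 : ℝ)
  · refine Tendsto.congr' ?_ (by simpa using hclose.add (hwinf.comp hs))
    filter_upwards [self_mem_nhdsWithin] with lam hlam
    simp [mul_div_cancel_left₀ _ hlam.out.ne']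

/-- Junction lemma: there exists `t(λ) > 0` with `t(λ) → 0` as `λ → 0⁺` such
that the time-rescaled regularised flow `w̃^λ(t(λ)) = w^λ(t(λ)/λ)` converges to
`w^GF_∞ = lim_{t→∞} w^GF(t)` as `λ → 0⁺`. -/
theorem junction_lemma
    {d : ℕ} (F : EuclideanSpace ℝ (Fin d) → ℝ)
    (hF : ContDiff ℝ 3 F)
    (hF3 : LocallyLipschitz (iteratedFDeriv ℝ 3 F))
    (w₀ : EuclideanSpace ℝ (Fin d))
    (w : ℝ → ℝ → EuclideanSpace ℝ (Fin d))
    (hw0 : ∀ lam : ℝ, 0 < lam → w lam 0 = w₀)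
    (hwode : ∀ lam : ℝ, 0 < lam → ∀ t : ℝ, 0 ≤ t →
      HasDerivAt (w lam) (-gradient F (w lam t) - lam • w lam t) t)
    (wGF : ℝ → EuclideanSpace ℝ (Fin d))
    (hgf0 : wGF 0 = w₀)
    (hgfode : ∀ t : ℝ, 0 ≤ t → HasDerivAt wGF (-gradient F (wGF t)) t)
    (hbdd : Bornology.IsBounded (wGF '' Set.Ici (0 : ℝ)))
    (winf : EuclideanSpace ℝ (Fin d))
    (hwinf : Tendsto wGF atTop (𝓝 winf)) :
    ∃ tfun : ℝ → ℝ,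
      (∀ lam : ℝ, 0 < lam → 0 < tfun lam) ∧
      Tendsto tfun (𝓝[>] (0 : ℝ)) (𝓝 0) ∧
      Tendsto (fun lam : ℝ => w lam (tfun lam / lam)) (𝓝[>] (0 : ℝ)) (𝓝 winf) :=
  junction_lemma_general F hF w₀ w hw0 hwode wGF hgf0 hgfode hbdd winf hwinf
end

section
/- For every w ∈ M, the Fréchet derivative DΦ_w of the limit map Φ at w equals the orthogonal projection of ℝ^d onto Ker(∇²F(w)) applied pointwise; consequently the unique solution of ẇ̃°(t) = −P_{Ker(∇²F(w̃°(t)))}(w̃°(t)), w̃°(0) = w_M ∈ M, coincides with the unique solution of ẇ̃°(t) = −DΦ_{w̃°(t)}(w̃°(t)), w̃°(0) = w_M. -/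
open Set Filter Topology
set_option maxHeartbeats 1000000

/-- A set `M` in a real normed space is an (embedded, `C^∞`) submanifold of codimension `m`
if around every point of `M` there is a local defining function which is a submersion on `M`. -/
def IsSubmanifoldCodim {E : Type*} [NormedAddCommGroup E] [NormedSpace ℝ E]
    (M : Set E) (m : ℕ) : Prop :=
  ∀ x ∈ M, ∃ (U : Set E) (f : E → EuclideanSpace ℝ (Fin m)),
    IsOpen U ∧ x ∈ U ∧ ContDiffOn ℝ (⊤ : ℕ∞) f U ∧
    (∀ y ∈ U, (y ∈ M ↔ f y = 0)) ∧
    ∀ y ∈ U ∩ M, Function.Surjective (fderiv ℝ f y)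

open Metric in
private lemma forward_ODE_uniq {E : Type*} [NormedAddCommGroup E] [NormedSpace ℝ E]
    {v : E → E} {W : Set E}
    (hv : ∀ p ∈ W, ∃ (K : NNReal) (r : ℝ), 0 < r ∧ LipschitzOnWith K v (ball p r))
    {f g : ℝ → E}
    (hf : ∀ t : ℝ, 0 ≤ t → HasDerivAt f (v (f t)) t)
    (hg : ∀ t : ℝ, 0 ≤ t → HasDerivAt g (v (g t)) t)
    (hfW : ∀ t : ℝ, 0 ≤ t → f t ∈ W)
    (h0 : f 0 = g 0) :
    ∀ t : ℝ, 0 ≤ t → f t = g t := by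
  intro T hT
  set A : Set ℝ := {t | t ∈ Icc 0 T ∧ ∀ s ∈ Icc 0 t, f s = g s} with hA
  have h0A : (0:ℝ) ∈ A := ⟨⟨le_rfl, hT⟩, fun s hs => by
    have : s = 0 := le_antisymm hs.2 hs.1
    rw [this]; exact h0⟩
  have hbdd : BddAbove A := ⟨T, fun t ht => ht.1.2⟩
  set τ := sSup A with hτdef
  have hτmem : τ ∈ Icc 0 T := ⟨le_csSup hbdd h0A, csSup_le ⟨0, h0A⟩ fun t ht => ht.1.2⟩
  have hlt : ∀ s, 0 ≤ s → s < τ → f s = g s := by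
    intro s hs0 hsτ
    obtain ⟨t, htA, hst⟩ := exists_lt_of_lt_csSup ⟨0, h0A⟩ hsτ
    exact htA.2 s ⟨hs0, hst.le⟩
  have hfτgτ : f τ = g τ := by
    rcases eq_or_lt_of_le hτmem.1 with h | h
    · rw [← h]; exact h0
    · have hfc : Tendsto f (𝓝[<] τ) (𝓝 (f τ)) :=
        (hf τ hτmem.1).continuousAt.continuousWithinAt.tendsto
      have h2 : Tendsto f (𝓝[<] τ) (𝓝 (g τ)) := by
        refine ((hg τ hτmem.1).continuousAt.continuousWithinAt.tendsto).congr' ?_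
        filter_upwards [Ioo_mem_nhdsLT_of_mem (show τ ∈ Ioc (0:ℝ) τ from ⟨h, le_rfl⟩)] with s hs
        exact (hlt s hs.1.le hs.2).symm
      exact tendsto_nhds_unique hfc h2
  have hτT : τ = T := by
    by_contra hne
    have hτltT : τ < T := lt_of_le_of_ne hτmem.2 hne
    obtain ⟨K, r, hr, hlip⟩ := hv (f τ) (hfW τ hτmem.1)
    have hfev : ∀ᶠ s in 𝓝 τ, f s ∈ ball (f τ) r ∧ g s ∈ ball (f τ) r := by
      have h1 : ∀ᶠ s in 𝓝 τ, f s ∈ ball (f τ) r :=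
        (hf τ hτmem.1).continuousAt (ball_mem_nhds _ hr)
      have h2 : ∀ᶠ s in 𝓝 τ, g s ∈ ball (f τ) r :=
        (hg τ hτmem.1).continuousAt (show ball (f τ) r ∈ 𝓝 (g τ) by
          rw [← hfτgτ]; exact ball_mem_nhds _ hr)
      exact h1.and h2
    obtain ⟨ε, hε, hball⟩ := Metric.eventually_nhds_iff_ball.mp hfev
    set δ : ℝ := min (ε/2) (T - τ) with hδdef
    have hδpos : 0 < δ := lt_min (by linarith) (by linarith)
    have hsub : ∀ s ∈ Icc τ (τ + δ), f s ∈ ball (f τ) r ∧ g s ∈ ball (f τ) r := by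
      intro s hs
      apply hball
      rw [Real.ball_eq_Ioo]
      constructor
      · have : τ - ε < τ := by linarith
        exact lt_of_lt_of_le this hs.1
      · have : τ + δ < τ + ε := by
          have : δ ≤ ε / 2 := min_le_left _ _
          linarith
        exact lt_of_le_of_lt hs.2 this
    have heqon : EqOn f g (Icc τ (τ + δ)) := by
      refine ODE_solution_unique_of_mem_Icc_right (v := fun _ y => v y)
        (s := fun _ => ball (f τ) r) (K := K) (fun _ _ => hlip) ?_ ?_ ?_ ?_ ?_ ?_ hfτgτ
      · exact fun s hs => (hf s (le_trans hτmem.1 hs.1)).continuousAt.continuousWithinAt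
      · exact fun s hs => (hf s (le_trans hτmem.1 hs.1)).hasDerivWithinAt
      · exact fun s hs => (hsub s (Ico_subset_Icc_self hs)).1
      · exact fun s hs => (hg s (le_trans hτmem.1 hs.1)).continuousAt.continuousWithinAt
      · exact fun s hs => (hg s (le_trans hτmem.1 hs.1)).hasDerivWithinAt
      · exact fun s hs => (hsub s (Ico_subset_Icc_self hs)).2
    have hmemA : τ + δ ∈ A := by
      refine ⟨⟨by linarith [hτmem.1], by
        have : δ ≤ T - τ := min_le_right _ _
        linarith⟩, fun s hs => ?_⟩
      rcases lt_or_ge s τ with h | h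
      · exact hlt s hs.1 h
      · exact heqon ⟨h, hs.2⟩
    have := le_csSup hbdd hmemA
    linarith
  rw [← hτT]; exact hfτgτ

/-- For every `w ∈ M`, the Fréchet derivative `DΦ_w` of the limit map `Φ`
equals the orthogonal projection onto `Ker(∇²F(w))`; consequently the (unique) solution of
`ẇ(t) = −P_{Ker(∇²F(w(t)))}(w(t))`, `w(0) = w_M ∈ M`, coincides with the (unique) solution of
`ẇ(t) = −DΦ_{w(t)}(w(t))`, `w(0) = w_M`. -/
theorem dPhi_eq_projection_and_flows_coincide
    {d : ℕ} (F : EuclideanSpace ℝ (Fin d) → ℝ)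
    (hF : ContDiff ℝ 3 F)
    (hF3 : LocallyLipschitz (iteratedFDeriv ℝ 3 F))
    (M : Set (EuclideanSpace ℝ (Fin d)))
    (x₀ : EuclideanSpace ℝ (Fin d)) (hx₀ : gradient F x₀ = 0)
    (hMcc : M = connectedComponentIn {x | gradient F x = 0} x₀)
    (k : ℕ) (hk : k ≤ d)
    (hman : IsSubmanifoldCodim M (d - k))
    (hrank : ∀ x ∈ M,
      Module.finrank ℝ (LinearMap.range (fderiv ℝ (gradient F) x : EuclideanSpace ℝ (Fin d) →ₗ[ℝ] EuclideanSpace ℝ (Fin d))) = d - k)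
    (η : ℝ) (hη : 0 < η)
    (heig : ∀ x ∈ M, ∀ μ : ℝ, μ ≠ 0 →
      Module.End.HasEigenvalue
        ((fderiv ℝ (gradient F) x : EuclideanSpace ℝ (Fin d) →L[ℝ] EuclideanSpace ℝ (Fin d))
          : EuclideanSpace ℝ (Fin d) →ₗ[ℝ] EuclideanSpace ℝ (Fin d)) μ → η ≤ μ)
    -- the unregularised gradient flow map `φ` and its limit map `Φ`, `C²` near `M`
    (φ : EuclideanSpace ℝ (Fin d) → ℝ → EuclideanSpace ℝ (Fin d))
    (hφ0 : ∀ x, φ x 0 = x)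
    (hφode : ∀ x, ∀ t : ℝ, 0 ≤ t → HasDerivAt (φ x) (-gradient F (φ x t)) t)
    (U : Set (EuclideanSpace ℝ (Fin d)))
    (Φ : EuclideanSpace ℝ (Fin d) → EuclideanSpace ℝ (Fin d))
    (hU : IsOpen U) (hMU : M ⊆ U)
    (hΦ : ContDiffOn ℝ 2 Φ U)
    (hΦlim : ∀ x ∈ U, Tendsto (φ x) atTop (𝓝 (Φ x))) :
    (∀ x ∈ M, ∀ v : EuclideanSpace ℝ (Fin d),
      fderiv ℝ Φ x v =
        (Submodule.orthogonalProjectionOnto (LinearMap.ker (fderiv ℝ (gradient F) x : EuclideanSpace ℝ (Fin d) →ₗ[ℝ] EuclideanSpace ℝ (Fin d))) v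
          : EuclideanSpace ℝ (Fin d))) ∧
    (∀ wM ∈ M, ∀ c₁ c₂ : ℝ → EuclideanSpace ℝ (Fin d),
      c₁ 0 = wM → (∀ t : ℝ, 0 ≤ t → c₁ t ∈ M) →
      (∀ t : ℝ, 0 ≤ t → HasDerivAt c₁
        (-(Submodule.orthogonalProjectionOnto (LinearMap.ker (fderiv ℝ (gradient F) (c₁ t) : EuclideanSpace ℝ (Fin d) →ₗ[ℝ] EuclideanSpace ℝ (Fin d)))
            (c₁ t) : EuclideanSpace ℝ (Fin d))) t) →
      c₂ 0 = wM → (∀ t : ℝ, 0 ≤ t → c₂ t ∈ M) →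
      (∀ t : ℝ, 0 ≤ t → HasDerivAt c₂ (-(fderiv ℝ Φ (c₂ t) (c₂ t))) t) →
      ∀ t : ℝ, 0 ≤ t → c₁ t = c₂ t) := by
  classical

  -- basic smoothness facts
  have hDF2 : ContDiff ℝ 2 (fderiv ℝ F) := hF.fderiv_right (by norm_num)
  have hgrad2 : ContDiff ℝ 2 (gradient F) :=
    (InnerProductSpace.toDual ℝ (EuclideanSpace ℝ (Fin d))).symm.contDiff.comp hDF2
  have hgradlip : ∀ p : EuclideanSpace ℝ (Fin d), ∃ (K : NNReal) (r : ℝ), 0 < r ∧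
      LipschitzOnWith K (fun y => -gradient F y) (Metric.ball p r) := by
    intro p
    have h1 : ContDiffAt ℝ 1 (fun y => -gradient F y) p :=
      (hgrad2.neg.of_le one_le_two).contDiffAt
    obtain ⟨K, t, ht, hl⟩ := h1.exists_lipschitzOnWith
    obtain ⟨r, hr, hrt⟩ := Metric.mem_nhds_iff.mp ht
    exact ⟨K, r, hr, hl.mono hrt⟩
  have hMcrit : ∀ p ∈ M, gradient F p = 0 := by
    intro p hp
    rw [hMcc] at hp
    exact (connectedComponentIn_subset {x : EuclideanSpace ℝ (Fin d) | gradient F x = 0} x₀) hp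
  -- critical points are fixed by the flow
  have hfix : ∀ p : EuclideanSpace ℝ (Fin d), gradient F p = 0 → ∀ t : ℝ, 0 ≤ t → φ p t = p := by
    intro p hp
    have := forward_ODE_uniq (W := (univ : Set (EuclideanSpace ℝ (Fin d)))) (v := fun y => -gradient F y)
      (f := φ p) (g := fun _ => p) (fun q _ => hgradlip q)
      (fun t ht => hφode p t ht)
      (fun t _ => by
        have h0 : ((fun y => -gradient F y) ((fun _ : ℝ => p) t)) = 0 := by simp [hp]
        rw [hp, neg_zero]
        exact hasDerivAt_const t p)
      (fun _ _ => mem_univ _) (hφ0 p)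
    exact this
  have hΦfix : ∀ p ∈ M, Φ p = p := by
    intro p hp
    have h1 := hΦlim p (hMU hp)
    have h2 : Tendsto (φ p) atTop (𝓝 p) := by
      refine tendsto_const_nhds.congr' ?_
      filter_upwards [eventually_ge_atTop (0:ℝ)] with t ht
      exact (hfix p (hMcrit p hp) t ht).symm
    exact tendsto_nhds_unique h1 h2
  -- the semigroup property
  have hsemi : ∀ y : EuclideanSpace ℝ (Fin d), ∀ t : ℝ, 0 ≤ t → ∀ s : ℝ, 0 ≤ s → φ (φ y t) s = φ y (t + s) := by
    intro y t ht
    have := forward_ODE_uniq (W := (univ : Set (EuclideanSpace ℝ (Fin d)))) (v := fun y => -gradient F y)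
      (f := φ (φ y t)) (g := fun s => φ y (t + s)) (fun q _ => hgradlip q)
      (fun s hs => hφode (φ y t) s hs)
      (fun s hs => by
        have h1 : HasDerivAt (φ y) (-gradient F (φ y (t + s))) (t + s) :=
          hφode y (t + s) (by linarith)
        have h2 : HasDerivAt (fun s' : ℝ => t + s') 1 s := (hasDerivAt_id s).const_add t
        have := h1.scomp s h2
        simpa [Function.comp_def] using this)
      (fun _ _ => mem_univ _)
      (by simp [hφ0])
    exact this
  have hdiffΦ : ∀ y ∈ U, DifferentiableAt ℝ Φ y := fun y hy =>
    (hΦ.contDiffAt (hU.mem_nhds hy)).differentiableAt (by norm_num)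
  -- (★): the derivative of Φ kills the gradient
  have hstar : ∀ y ∈ U, fderiv ℝ Φ y (gradient F y) = 0 := by
    intro y hy
    have hφy0 : φ y 0 = y := hφ0 y
    have hd0 : HasDerivAt (φ y) (-gradient F y) 0 := by
      have := hφode y 0 le_rfl; rwa [hφy0] at this
    have hψd : HasDerivAt (fun t => Φ (φ y t)) (fderiv ℝ Φ y (-gradient F y)) 0 := by
      have hΦd : HasFDerivAt Φ (fderiv ℝ Φ y) (φ y 0) := by
        rw [hφy0]; exact (hdiffΦ y hy).hasFDerivAt
      exact hΦd.comp_hasDerivAt 0 hd0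
    have hconst : ∀ᶠ t in 𝓝[≥] (0:ℝ), Φ (φ y t) = Φ y := by
      have hUev : ∀ᶠ t in 𝓝 (0:ℝ), φ y t ∈ U :=
        hd0.continuousAt (by rw [hφy0]; exact hU.mem_nhds hy)
      filter_upwards [hUev.filter_mono nhdsWithin_le_nhds, eventually_mem_nhdsWithin]
        with t htU ht
      have ht0 : (0:ℝ) ≤ t := ht
      have h1 : Tendsto (φ (φ y t)) atTop (𝓝 (Φ (φ y t))) := hΦlim _ htU
      have h2 : Tendsto (fun s => φ y (t + s)) atTop (𝓝 (Φ y)) :=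
        (hΦlim y hy).comp (tendsto_atTop_add_const_left atTop t tendsto_id)
      have h3 : Tendsto (fun s => φ y (t + s)) atTop (𝓝 (Φ (φ y t))) := by
        refine h1.congr' ?_
        filter_upwards [eventually_ge_atTop (0:ℝ)] with s hs
        exact hsemi y t ht0 s hs
      exact tendsto_nhds_unique h3 h2
    have hψ0 : HasDerivWithinAt (fun t => Φ (φ y t)) 0 (Ici 0) 0 :=
      (hasDerivWithinAt_const 0 _ (Φ y)).congr_of_eventuallyEq hconst (by rw [hφy0])
    have hud : UniqueDiffWithinAt ℝ (Ici (0:ℝ)) 0 := uniqueDiffOn_Ici 0 0 self_mem_Ici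
    have e1 := (hψd.hasDerivWithinAt (s := Ici 0)).derivWithin hud
    have e2 := hψ0.derivWithin hud
    have : fderiv ℝ Φ y (-gradient F y) = 0 := e1.symm.trans e2
    rwa [map_neg, neg_eq_zero] at this
  have hfderivΦC1 : ContDiffOn ℝ 1 (fderiv ℝ Φ) U := hΦ.fderiv_of_isOpen hU (by norm_num)
  -- ## Part 1
  have key : ∀ x ∈ M, ∀ v : EuclideanSpace ℝ (Fin d),
      fderiv ℝ Φ x v =
        (Submodule.orthogonalProjectionOnto (LinearMap.ker (fderiv ℝ (gradient F) x : EuclideanSpace ℝ (Fin d) →ₗ[ℝ] EuclideanSpace ℝ (Fin d))) v : EuclideanSpace ℝ (Fin d)) := by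
    intro x hx v
    have hxU : x ∈ U := hMU hx
    set H := fderiv ℝ (gradient F) x with hHdef
    have hHfd : HasFDerivAt (gradient F) H x :=
      ((hgrad2.differentiable (by norm_num)) x).hasFDerivAt
    -- (C) : DΦ_x ∘ H = 0
    have hC : ∀ w : EuclideanSpace ℝ (Fin d), fderiv ℝ Φ x (H w) = 0 := by
      have hG : (fun y => fderiv ℝ Φ y (gradient F y)) =ᶠ[𝓝 x] (fun _ => (0:EuclideanSpace ℝ (Fin d))) := by
        filter_upwards [hU.mem_nhds hxU] with y hy
        exact hstar y hy
      have hc : HasFDerivAt (fderiv ℝ Φ) (fderiv ℝ (fderiv ℝ Φ) x) x :=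
        ((hfderivΦC1.contDiffAt (hU.mem_nhds hxU)).differentiableAt (by norm_num)).hasFDerivAt
      have hGfd : HasFDerivAt (fun y => fderiv ℝ Φ y (gradient F y))
          ((fderiv ℝ Φ x).comp H + (fderiv ℝ (fderiv ℝ Φ) x).flip (gradient F x)) x :=
        hc.clm_apply hHfd
      have h0' : fderiv ℝ (fun y => fderiv ℝ Φ y (gradient F y)) x = 0 := by
        rw [hG.fderiv_eq]
        exact fderiv_const_apply _
      have hsum := hGfd.fderiv.symm.trans h0'
      intro w
      have h2 := congrArg (fun (T : EuclideanSpace ℝ (Fin d) →L[ℝ] EuclideanSpace ℝ (Fin d)) => T w) hsum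
      simpa [hMcrit x hx] using h2
    -- symmetry of the Hessian
    have hsym : ∀ u w : EuclideanSpace ℝ (Fin d), (inner ℝ (H u) w : ℝ) = (inner ℝ u (H w) : ℝ) := by
      have hDF : ∀ y, HasFDerivAt F (fderiv ℝ F y) y := fun y =>
        ((hF.differentiable (by norm_num)) y).hasFDerivAt
      have hD2 : HasFDerivAt (fderiv ℝ F) (fderiv ℝ (fderiv ℝ F) x) x :=
        ((hDF2.differentiable (by norm_num)) x).hasFDerivAt
      have hsymm := second_derivative_symmetric hDF hD2
      have key2 : ∀ u w : EuclideanSpace ℝ (Fin d), (inner ℝ (H u) w : ℝ) = (fderiv ℝ (fderiv ℝ F) x u) w := by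
        intro u w
        have hf1 : HasFDerivAt (fun y => (inner ℝ (gradient F y) w : ℝ))
            (((innerSL ℝ).flip w).comp H) x :=
          ((((innerSL ℝ).flip w).hasFDerivAt).comp x hHfd : _)
        have hf2 : HasFDerivAt (fun y => fderiv ℝ F y w)
            ((ContinuousLinearMap.apply ℝ ℝ w).comp (fderiv ℝ (fderiv ℝ F) x)) x :=
          ((ContinuousLinearMap.apply ℝ ℝ w).hasFDerivAt).comp x hD2
        have heq : (fun y => (inner ℝ (gradient F y) w : ℝ)) = fun y => fderiv ℝ F y w := by
          funext y
          exact InnerProductSpace.toDual_symm_apply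
        rw [heq] at hf1
        have h2 := congrArg (fun (T : EuclideanSpace ℝ (Fin d) →L[ℝ] ℝ) => T u) (hf1.unique hf2)
        simpa only [ContinuousLinearMap.coe_comp', Function.comp_apply,
          ContinuousLinearMap.flip_apply, innerSL_apply_apply,
          ContinuousLinearMap.apply_apply] using h2
      intro u w
      rw [key2, real_inner_comm, key2]
      exact hsymm u w
    -- range H = (ker H)ᗮ
    have hrn : Module.finrank ℝ (LinearMap.range (H : EuclideanSpace ℝ (Fin d) →ₗ[ℝ] EuclideanSpace ℝ (Fin d))) + Module.finrank ℝ (LinearMap.ker (H : EuclideanSpace ℝ (Fin d) →ₗ[ℝ] EuclideanSpace ℝ (Fin d)))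
        = d := by
      have := LinearMap.finrank_range_add_finrank_ker (H : EuclideanSpace ℝ (Fin d) →ₗ[ℝ] EuclideanSpace ℝ (Fin d))
      rw [finrank_euclideanSpace_fin] at this
      simpa using this
    have hkerdim : Module.finrank ℝ (LinearMap.ker (H : EuclideanSpace ℝ (Fin d) →ₗ[ℝ] EuclideanSpace ℝ (Fin d))) = k := by
      have h1 := hrank x hx
      rw [← hHdef] at h1
      omega
    have hrangeK : LinearMap.range (H : EuclideanSpace ℝ (Fin d) →ₗ[ℝ] EuclideanSpace ℝ (Fin d)) = (LinearMap.ker (H : EuclideanSpace ℝ (Fin d) →ₗ[ℝ] EuclideanSpace ℝ (Fin d)))ᗮ := by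
      have hle : LinearMap.range (H : EuclideanSpace ℝ (Fin d) →ₗ[ℝ] EuclideanSpace ℝ (Fin d)) ≤ (LinearMap.ker (H : EuclideanSpace ℝ (Fin d) →ₗ[ℝ] EuclideanSpace ℝ (Fin d)))ᗮ := by
        rintro u ⟨w, rfl⟩
        rw [Submodule.mem_orthogonal]
        intro z hz
        have hz0 : H z = 0 := hz
        rw [ContinuousLinearMap.coe_coe, real_inner_comm, hsym w z, hz0, inner_zero_right]
      refine Submodule.eq_of_le_of_finrank_eq hle ?_
      have h2 : Module.finrank ℝ (LinearMap.ker (H : EuclideanSpace ℝ (Fin d) →ₗ[ℝ] EuclideanSpace ℝ (Fin d)))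
          + Module.finrank ℝ (LinearMap.ker (H : EuclideanSpace ℝ (Fin d) →ₗ[ℝ] EuclideanSpace ℝ (Fin d)))ᗮ = d := by
        have := Submodule.finrank_add_finrank_orthogonal (K := LinearMap.ker (H : EuclideanSpace ℝ (Fin d) →ₗ[ℝ] EuclideanSpace ℝ (Fin d))) (E := EuclideanSpace ℝ (Fin d))
        rw [finrank_euclideanSpace_fin] at this
        exact this
      have h1 := hrank x hx
      rw [← hHdef] at h1
      omega
    have hperp : ∀ u ∈ (LinearMap.ker (H : EuclideanSpace ℝ (Fin d) →ₗ[ℝ] EuclideanSpace ℝ (Fin d)))ᗮ, fderiv ℝ Φ x u = 0 := by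
      rw [← hrangeK]
      rintro u ⟨w, rfl⟩
      exact hC w
    -- tangent directions : curves inside M
    have htan : ∀ u ∈ LinearMap.ker (H : EuclideanSpace ℝ (Fin d) →ₗ[ℝ] EuclideanSpace ℝ (Fin d)), fderiv ℝ Φ x u = u := by
      obtain ⟨V, f, hVopen, hxV, hfsmooth, hfiff, hfsurj⟩ := hman x hx
      set L := fderiv ℝ f x with hLdef
      have hLsurj : Function.Surjective L := hfsurj x ⟨hxV, hx⟩
      set Kr := LinearMap.ker (L : EuclideanSpace ℝ (Fin d) →ₗ[ℝ] EuclideanSpace ℝ (Fin (d - k))) with hKrdef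
      set P : EuclideanSpace ℝ (Fin d) →L[ℝ] Kr := Submodule.orthogonalProjectionOnto Kr with hPdef
      set T : EuclideanSpace ℝ (Fin d) →L[ℝ] (EuclideanSpace ℝ (Fin (d - k)) × Kr) :=
        L.prod P with hTdef
      -- `T` is injective
      have hTker : ∀ u : EuclideanSpace ℝ (Fin d), T u = 0 → u = 0 := by
        intro u hu
        have h1 : L u = 0 := by have := congrArg Prod.fst hu; simpa [hTdef] using this
        have h2 : P u = 0 := by have := congrArg Prod.snd hu; simpa [hTdef] using this
        have huK : u ∈ Kr := LinearMap.mem_ker.mpr h1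
        have h3 : P u = ⟨u, huK⟩ :=
          Submodule.orthogonalProjectionOnto_mem_subspace_eq_self (⟨u, huK⟩ : Kr)
        rw [h3] at h2
        simpa using congrArg Subtype.val h2
      have hker : LinearMap.ker (T : EuclideanSpace ℝ (Fin d) →ₗ[ℝ] EuclideanSpace ℝ (Fin (d - k)) × Kr) = ⊥ := LinearMap.ker_eq_bot'.mpr hTker
      -- dimension count
      have hrangeL : Module.finrank ℝ (LinearMap.range (L : EuclideanSpace ℝ (Fin d) →ₗ[ℝ] EuclideanSpace ℝ (Fin (d - k)))) = d - k := by
        rw [LinearMap.range_eq_top.mpr hLsurj, finrank_top, finrank_euclideanSpace_fin]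
      have hfinKr : Module.finrank ℝ Kr = k := by
        have h1 := LinearMap.finrank_range_add_finrank_ker
          (L : EuclideanSpace ℝ (Fin d) →ₗ[ℝ] EuclideanSpace ℝ (Fin (d - k)))
        rw [finrank_euclideanSpace_fin] at h1
        have hrr : LinearMap.range (L : EuclideanSpace ℝ (Fin d) →ₗ[ℝ]
            EuclideanSpace ℝ (Fin (d - k))) = LinearMap.range (L : EuclideanSpace ℝ (Fin d) →ₗ[ℝ] EuclideanSpace ℝ (Fin (d - k))) := rfl
        have hkk : LinearMap.ker (L : EuclideanSpace ℝ (Fin d) →ₗ[ℝ]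
            EuclideanSpace ℝ (Fin (d - k))) = LinearMap.ker (L : EuclideanSpace ℝ (Fin d) →ₗ[ℝ] EuclideanSpace ℝ (Fin (d - k))) := rfl
        rw [hrr, hkk, hrangeL] at h1
        rw [hKrdef]
        omega
      have hfr : Module.finrank ℝ (EuclideanSpace ℝ (Fin d))
          = Module.finrank ℝ (EuclideanSpace ℝ (Fin (d - k)) × Kr) := by
        rw [finrank_euclideanSpace_fin, Module.finrank_prod, finrank_euclideanSpace_fin, hfinKr]
        omega
      have htop : LinearMap.range (T : EuclideanSpace ℝ (Fin d) →ₗ[ℝ] EuclideanSpace ℝ (Fin (d - k)) × Kr) = ⊤ := by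
        have := (LinearMap.ker_eq_bot_iff_range_eq_top_of_finrank_eq_finrank hfr
          (f := (T : EuclideanSpace ℝ (Fin d) →ₗ[ℝ] EuclideanSpace ℝ (Fin (d - k)) × Kr)))
        have hker' : LinearMap.ker
            (T : EuclideanSpace ℝ (Fin d) →ₗ[ℝ] EuclideanSpace ℝ (Fin (d - k)) × Kr) = ⊥ := by
          simpa using hker
        have := this.mp hker'
        simpa using this
      set e := ContinuousLinearEquiv.ofBijective T hker htop with hedef
      have hcoe : (e : EuclideanSpace ℝ (Fin d) →L[ℝ] EuclideanSpace ℝ (Fin (d - k)) × Kr)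
          = T := ContinuousLinearEquiv.coe_ofBijective _ _ _
      -- `g` has invertible strict derivative `e` at `x`
      set g := fun y : EuclideanSpace ℝ (Fin d) => (f y, P (y - x)) with hgdef
      have hfstrict : HasStrictFDerivAt f L x :=
        (hfsmooth.contDiffAt (hVopen.mem_nhds hxV)).hasStrictFDerivAt (by simp)
      have hPstrict : HasStrictFDerivAt (fun y : EuclideanSpace ℝ (Fin d) => P (y - x)) P x := by
        have h1 : HasStrictFDerivAt (fun y : EuclideanSpace ℝ (Fin d) => P y - P x) P x :=
          P.hasStrictFDerivAt.sub_const (P x)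
        have h2 : (fun y : EuclideanSpace ℝ (Fin d) => P (y - x))
            = fun y : EuclideanSpace ℝ (Fin d) => P y - P x := by
          funext y; rw [map_sub]
        rw [h2]
        exact h1
      have hgstrict : HasStrictFDerivAt g
          (e : EuclideanSpace ℝ (Fin d) →L[ℝ] EuclideanSpace ℝ (Fin (d - k)) × Kr) x := by
        rw [hcoe]
        exact hfstrict.prodMk hPstrict
      have hfx0 : f x = 0 := (hfiff x hxV).mp hx
      have hgx : g x = 0 := by
        simp [hgdef, hfx0]
      -- curves inside `M` in any direction of `Kr`
      have hcurve : ∀ u ∈ Kr, ∃ γ : ℝ → EuclideanSpace ℝ (Fin d),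
          γ 0 = x ∧ HasDerivAt γ u 0 ∧ ∀ᶠ t in 𝓝 (0:ℝ), γ t ∈ M := by
        intro u hu
        set ub : Kr := ⟨u, hu⟩ with hubdef
        set w : ℝ → EuclideanSpace ℝ (Fin (d - k)) × Kr := fun t => (0, t • ub) with hwdef
        have hw0 : w 0 = g x := by
          rw [hgx]
          simp [hwdef]
        have hwd : HasDerivAt w ((0 : EuclideanSpace ℝ (Fin (d - k))), ub) 0 := by
          have h1 : HasDerivAt (fun _ : ℝ => (0 : EuclideanSpace ℝ (Fin (d - k)))) 0 0 :=
            hasDerivAt_const _ _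
          have h2 : HasDerivAt (fun t : ℝ => t • ub) ((1:ℝ) • ub) 0 :=
            (hasDerivAt_id 0).smul_const ub
          have := h1.prodMk h2
          simpa using this
        set γ := fun t => HasStrictFDerivAt.localInverse g e x hgstrict (w t) with hγdef
        have hγ0 : γ 0 = x := by
          show HasStrictFDerivAt.localInverse g e x hgstrict (w 0) = x
          rw [hw0]
          exact hgstrict.localInverse_apply_image
        refine ⟨γ, hγ0, ?_, ?_⟩
        · have hl2 : HasFDerivAt (HasStrictFDerivAt.localInverse g e x hgstrict)
              ((e.symm : EuclideanSpace ℝ (Fin (d - k)) × Kr →L[ℝ] EuclideanSpace ℝ (Fin d)))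
              (w 0) := by
            rw [hw0]
            exact hgstrict.to_localInverse.hasFDerivAt
          have hcomp := hl2.comp_hasDerivAt 0 hwd
          have heu : e u = ((0 : EuclideanSpace ℝ (Fin (d - k))), ub) := by
            have h1 : e u = T u := by rw [← hcoe]; rfl
            have h2 : T u = (L u, P u) := rfl
            have h3 : L u = 0 := LinearMap.mem_ker.mp hu
            have h4 : P u = ub := Submodule.orthogonalProjectionOnto_mem_subspace_eq_self ub
            rw [h1, h2, h3, h4]
          have hsymm_eu : ((e.symm : EuclideanSpace ℝ (Fin (d - k)) × Kr →L[ℝ]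
              EuclideanSpace ℝ (Fin d)) ((0 : EuclideanSpace ℝ (Fin (d - k))), ub)) = u := by
            show e.symm ((0 : EuclideanSpace ℝ (Fin (d - k))), ub) = u
            rw [← heu]
            exact e.symm_apply_apply u
          rwa [hsymm_eu] at hcomp
        · have hwc : Tendsto w (𝓝 0) (𝓝 (g x)) := by
            rw [← hw0]
            exact hwd.continuousAt
          have h1 : ∀ᶠ t in 𝓝 (0:ℝ), g (γ t) = w t :=
            hwc.eventually hgstrict.eventually_right_inverse
          have hγc : ContinuousAt γ 0 := by
            have hc1 : ContinuousAt (HasStrictFDerivAt.localInverse g e x hgstrict) (w 0) := by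
              rw [hw0]
              exact hgstrict.localInverse_continuousAt
            exact hc1.comp hwd.continuousAt
          have h2 : ∀ᶠ t in 𝓝 (0:ℝ), γ t ∈ V := by
            apply hγc
            rw [hγ0]
            exact hVopen.mem_nhds hxV
          filter_upwards [h1, h2] with t h1t h2t
          have hft : f (γ t) = 0 := by
            have := congrArg Prod.fst h1t
            simpa [hgdef, hwdef] using this
          exact (hfiff (γ t) h2t).mpr hft
      -- `Kr ≤ ker H`, hence `Kr = ker H` by dimension count
      have hKrH : Kr ≤ LinearMap.ker (H : EuclideanSpace ℝ (Fin d) →ₗ[ℝ] EuclideanSpace ℝ (Fin d)) := by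
        intro u hu
        obtain ⟨γ, hγ0, hγd, hγM⟩ := hcurve u hu
        have hHfd' : HasFDerivAt (gradient F) H (γ 0) := by rw [hγ0]; exact hHfd
        have hcomp : HasDerivAt (fun t => gradient F (γ t)) (H u) 0 :=
          hHfd'.comp_hasDerivAt 0 hγd
        have hzero : (fun t => gradient F (γ t))
            =ᶠ[𝓝 (0:ℝ)] (fun _ => (0 : EuclideanSpace ℝ (Fin d))) := by
          filter_upwards [hγM] with t ht
          exact hMcrit _ ht
        have h2 : HasDerivAt (fun _ : ℝ => (0 : EuclideanSpace ℝ (Fin d))) (H u) 0 :=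
          hcomp.congr_of_eventuallyEq hzero.symm
        have h3 : H u = 0 := h2.unique (hasDerivAt_const _ _)
        exact LinearMap.mem_ker.mpr h3
      have hKrEq : Kr = LinearMap.ker (H : EuclideanSpace ℝ (Fin d) →ₗ[ℝ] EuclideanSpace ℝ (Fin d)) :=
        Submodule.eq_of_le_of_finrank_eq hKrH (by rw [hfinKr, hkerdim])
      intro u hu
      rw [← hKrEq] at hu
      obtain ⟨γ, hγ0, hγd, hγM⟩ := hcurve u hu
      have h1 : HasFDerivAt Φ (fderiv ℝ Φ x) (γ 0) := by
        rw [hγ0]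
        exact (hdiffΦ x hxU).hasFDerivAt
      have hΦcomp : HasDerivAt (fun t => Φ (γ t)) (fderiv ℝ Φ x u) 0 :=
        h1.comp_hasDerivAt 0 hγd
      have heq2 : (fun t => Φ (γ t)) =ᶠ[𝓝 (0:ℝ)] γ := by
        filter_upwards [hγM] with t ht
        exact hΦfix _ ht
      have h3 : HasDerivAt γ (fderiv ℝ Φ x u) 0 := hΦcomp.congr_of_eventuallyEq heq2.symm
      exact h3.unique hγd
    -- assemble
    have hdec : v = (Submodule.orthogonalProjectionOnto (LinearMap.ker (H : EuclideanSpace ℝ (Fin d) →ₗ[ℝ] EuclideanSpace ℝ (Fin d))) v : EuclideanSpace ℝ (Fin d))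
        + (v - (Submodule.orthogonalProjectionOnto (LinearMap.ker (H : EuclideanSpace ℝ (Fin d) →ₗ[ℝ] EuclideanSpace ℝ (Fin d))) v : EuclideanSpace ℝ (Fin d))) := by abel
    calc fderiv ℝ Φ x v
        = fderiv ℝ Φ x ((Submodule.orthogonalProjectionOnto (LinearMap.ker (H : EuclideanSpace ℝ (Fin d) →ₗ[ℝ] EuclideanSpace ℝ (Fin d))) v : EuclideanSpace ℝ (Fin d))
            + (v - (Submodule.orthogonalProjectionOnto (LinearMap.ker (H : EuclideanSpace ℝ (Fin d) →ₗ[ℝ] EuclideanSpace ℝ (Fin d))) v : EuclideanSpace ℝ (Fin d)))) := by rw [← hdec]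
      _ = fderiv ℝ Φ x (Submodule.orthogonalProjectionOnto (LinearMap.ker (H : EuclideanSpace ℝ (Fin d) →ₗ[ℝ] EuclideanSpace ℝ (Fin d))) v : EuclideanSpace ℝ (Fin d))
            + fderiv ℝ Φ x (v - (Submodule.orthogonalProjectionOnto (LinearMap.ker (H : EuclideanSpace ℝ (Fin d) →ₗ[ℝ] EuclideanSpace ℝ (Fin d))) v : EuclideanSpace ℝ (Fin d))) :=
          map_add _ _ _
      _ = (Submodule.orthogonalProjectionOnto (LinearMap.ker (H : EuclideanSpace ℝ (Fin d) →ₗ[ℝ] EuclideanSpace ℝ (Fin d))) v : EuclideanSpace ℝ (Fin d)) := by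
          rw [htan _ (SetLike.coe_mem _),
            hperp (v - (Submodule.orthogonalProjectionOnto (LinearMap.ker (H : EuclideanSpace ℝ (Fin d) →ₗ[ℝ] EuclideanSpace ℝ (Fin d))) v : EuclideanSpace ℝ (Fin d))) (Submodule.sub_starProjection_mem_orthogonal v), add_zero]
  refine ⟨key, ?_⟩
  -- ## Part 2
  intro wM hwM c₁ c₂ h10 h1M h1ode h20 h2M h2ode
  have hvU : ∀ p ∈ U, ∃ (K : NNReal) (r : ℝ), 0 < r ∧
      LipschitzOnWith K (fun y => -fderiv ℝ Φ y y) (Metric.ball p r) := by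
    intro p hp
    have h1 : ContDiffAt ℝ 1 (fun y => -fderiv ℝ Φ y y) p := by
      have h2 : ContDiffAt ℝ 1 (fderiv ℝ Φ) p := hfderivΦC1.contDiffAt (hU.mem_nhds hp)
      exact (h2.clm_apply contDiffAt_id).neg
    obtain ⟨K, t, ht, hl⟩ := h1.exists_lipschitzOnWith
    obtain ⟨r, hr, hrt⟩ := Metric.mem_nhds_iff.mp ht
    exact ⟨K, r, hr, hl.mono hrt⟩
  refine forward_ODE_uniq (W := U) (v := fun y => -fderiv ℝ Φ y y) hvU ?_ ?_ ?_
    (h10.trans h20.symm)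
  · intro t ht
    have := h1ode t ht
    have heq : (Submodule.orthogonalProjectionOnto (LinearMap.ker (fderiv ℝ (gradient F) (c₁ t) : EuclideanSpace ℝ (Fin d) →ₗ[ℝ] EuclideanSpace ℝ (Fin d)))
        (c₁ t) : EuclideanSpace ℝ (Fin d)) = fderiv ℝ Φ (c₁ t) (c₁ t) := (key (c₁ t) (h1M t ht) (c₁ t)).symm
    rwa [heq] at this
  · intro t ht
    exact h2ode t ht
  · intro t ht
    exact hMU (h1M t ht)
end

section
/- Assume the Riemannian flow w̃°(t) converges as t → ∞ to a point w* ∈ M which is a strict local minimum of the squared Euclidean norm on M. Then there exists δ* > 0 such that for every δ ∈ (0, δ*) there exist ε > 0 and λ* > 0 such that for every λ ∈ (0, λ*): inf_{w : ‖w − w*‖ = δ} F_λ(w) > F* + λ‖w*‖²/2 + λε, where F_λ(w) = F(w) + (λ/2)‖w‖₂² and F* is the common value of F on M. -/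
open Set Filter Topology

open scoped RealInnerProductSpace


section AuxLemmas

variable {d : ℕ}

/-- The inverse of `toDual` as a genuinely ℝ-linear continuous map. -/
noncomputable def toDualSymmL (d : ℕ) :
    StrongDual ℝ (EuclideanSpace ℝ (Fin d)) →L[ℝ] EuclideanSpace ℝ (Fin d) where
  toFun := fun y => (InnerProductSpace.toDual ℝ (EuclideanSpace ℝ (Fin d))).symm y
  map_add' := by intros; simp
  map_smul' := by intros; simp
  cont := (InnerProductSpace.toDual ℝ (EuclideanSpace ℝ (Fin d))).symm.continuous

lemma inner_toDualSymmL (y : StrongDual ℝ (EuclideanSpace ℝ (Fin d)))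
    (v : EuclideanSpace ℝ (Fin d)) : ⟪toDualSymmL d y, v⟫ = y v :=
  InnerProductSpace.toDual_symm_apply

variable {F : EuclideanSpace ℝ (Fin d) → ℝ}

lemma grad_eq_comp (F : EuclideanSpace ℝ (Fin d) → ℝ) :
    gradient F = fun x => toDualSymmL d (fderiv ℝ F x) := rfl

lemma grad_contDiff (hF : ContDiff ℝ 3 F) : ContDiff ℝ 2 (gradient F) := by
  rw [grad_eq_comp]
  exact (toDualSymmL d).contDiff.comp (hF.fderiv_right (by norm_num))

lemma inner_grad (F : EuclideanSpace ℝ (Fin d) → ℝ) (x v : EuclideanSpace ℝ (Fin d)) :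
    ⟪gradient F x, v⟫ = fderiv ℝ F x v :=
  InnerProductSpace.toDual_symm_apply

lemma hasFDerivAt_grad (hF : ContDiff ℝ 3 F) (z : EuclideanSpace ℝ (Fin d)) :
    HasFDerivAt (gradient F) ((toDualSymmL d).comp (fderiv ℝ (fderiv ℝ F) z)) z := by
  have h1 : ContDiff ℝ 2 (fderiv ℝ F) := hF.fderiv_right (by norm_num)
  have h2 : HasFDerivAt (fderiv ℝ F) (fderiv ℝ (fderiv ℝ F) z) z :=
    ((h1.differentiable (by norm_num)) z).hasFDerivAt
  exact (toDualSymmL d).hasFDerivAt.comp z h2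

lemma inner_hess (hF : ContDiff ℝ 3 F) (z u v : EuclideanSpace ℝ (Fin d)) :
    ⟪fderiv ℝ (gradient F) z u, v⟫ = fderiv ℝ (fderiv ℝ F) z u v := by
  rw [(hasFDerivAt_grad hF z).fderiv]
  exact inner_toDualSymmL _ _

lemma hess_symmetric (hF : ContDiff ℝ 3 F) (z : EuclideanSpace ℝ (Fin d)) :
    LinearMap.IsSymmetric
      ((fderiv ℝ (gradient F) z : EuclideanSpace ℝ (Fin d) →L[ℝ] EuclideanSpace ℝ (Fin d))
        : EuclideanSpace ℝ (Fin d) →ₗ[ℝ] EuclideanSpace ℝ (Fin d)) := by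
  intro u v
  have hsymm : IsSymmSndFDerivAt ℝ F z := hF.contDiffAt.isSymmSndFDerivAt (by norm_num)
  simp only [ContinuousLinearMap.coe_coe]
  rw [inner_hess hF, real_inner_comm, inner_hess hF]
  exact hsymm u v

end AuxLemmas

lemma spectral_bound {d : ℕ}
    {T : EuclideanSpace ℝ (Fin d) →ₗ[ℝ] EuclideanSpace ℝ (Fin d)}
    (hT : T.IsSymmetric) {η : ℝ}
    (heig : ∀ μ : ℝ, μ ≠ 0 → Module.End.HasEigenvalue T μ → η ≤ μ)
    {v : EuclideanSpace ℝ (Fin d)} (hv : v ∈ (LinearMap.ker T)ᗮ) :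
    η * ‖v‖ ^ 2 ≤ ⟪T v, v⟫ := by
  have hn : Module.finrank ℝ (EuclideanSpace ℝ (Fin d)) = d := finrank_euclideanSpace_fin
  set b := hT.eigenvectorBasis hn with hb
  set μ := hT.eigenvalues hn with hμdef
  have happ : ∀ i, T (b i) = μ i • b i := fun i => hT.apply_eigenvectorBasis hn i
  have hμ : ∀ i, μ i = 0 ∨ η ≤ μ i := by
    intro i
    by_cases h : μ i = 0
    · exact Or.inl h
    · exact Or.inr (heig _ h (hT.hasEigenvalue_eigenvalues hn i))
  have hzero : ∀ i, μ i = 0 → ⟪v, b i⟫ = 0 := by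
    intro i h0
    have hbk : b i ∈ LinearMap.ker T := by
      rw [LinearMap.mem_ker, happ i, h0, zero_smul]
    rw [real_inner_comm]
    exact (Submodule.mem_orthogonal _ v).mp hv (b i) hbk
  have hTv : ∀ i, ⟪T v, b i⟫ = μ i * ⟪v, b i⟫ := by
    intro i
    rw [hT v (b i), happ i, real_inner_smul_right]
  have h1 : ⟪T v, v⟫ = ∑ i, μ i * ⟪v, b i⟫ ^ 2 := by
    rw [← b.sum_inner_mul_inner (T v) v]
    refine Finset.sum_congr rfl fun i _ => ?_
    rw [hTv i, real_inner_comm (b i) v]; ring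
  have h2 : ‖v‖ ^ 2 = ∑ i, ⟪v, b i⟫ ^ 2 := by
    have h3 := b.sum_inner_mul_inner v v
    rw [← real_inner_self_eq_norm_sq, ← h3]
    refine Finset.sum_congr rfl fun i _ => ?_
    rw [real_inner_comm (b i) v]; ring
  rw [h1, h2, Finset.mul_sum]
  refine Finset.sum_le_sum fun i _ => ?_
  rcases hμ i with h0 | hge
  · rw [hzero i h0, h0]; ring_nf; simp
  · nlinarith [sq_nonneg (⟪v, b i⟫ : ℝ)]

lemma taylor_lower {d : ℕ} {F : EuclideanSpace ℝ (Fin d) → ℝ}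
    (hF : ContDiff ℝ 3 F) (z v : EuclideanSpace ℝ (Fin d)) {C : ℝ}
    (hgz : gradient F z = 0)
    (hC : ∀ w ∈ segment ℝ z (z + v),
      ‖fderiv ℝ (gradient F) w - fderiv ℝ (gradient F) z‖ ≤ C) :
    F z + (⟪fderiv ℝ (gradient F) z v, v⟫ - C * ‖v‖ ^ 2) / 2 ≤ F (z + v) := by
  have hg : ContDiff ℝ 2 (gradient F) := grad_contDiff hF
  have hgdiff : Differentiable ℝ (gradient F) := hg.differentiable (by norm_num)
  have hFdiff : Differentiable ℝ F := hF.differentiable (by norm_num)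
  set T := fderiv ℝ (gradient F) z with hTdef
  set K := (⟪T v, v⟫ - C * ‖v‖ ^ 2 : ℝ) with hKdef
  set c : ℝ → EuclideanSpace ℝ (Fin d) := fun t => z + t • v with hcdef
  have hcder : ∀ t : ℝ, HasDerivAt c v t := by
    intro t
    have h1 : HasDerivAt (fun s : ℝ => s • v) ((1:ℝ) • v) t := (hasDerivAt_id t).smul_const v
    simpa [hcdef] using h1.const_add z
  have hφ : ∀ t : ℝ, HasDerivAt (fun s => F (c s)) (fderiv ℝ F (c t) v) t := fun t =>
    ((hFdiff (c t)).hasFDerivAt).comp_hasDerivAt t (hcder t)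
  have hccont : Continuous c :=
    continuous_const.add (continuous_id.smul continuous_const)
  have hcont : Continuous fun t => fderiv ℝ F (c t) v :=
    (((hF.fderiv_right (by norm_num)).continuous (n := 2)).comp hccont).clm_apply
      continuous_const
  have hFTC : ∫ t in (0:ℝ)..1, fderiv ℝ F (c t) v = F (z + v) - F z := by
    have h := intervalIntegral.integral_eq_sub_of_hasDerivAt (f := fun s => F (c s))
      (fun t _ => hφ t) (hcont.intervalIntegrable 0 1)
    have h0 : c 0 = z := by simp [hcdef]
    have h1 : c 1 = z + v := by simp [hcdef]
    rw [h]
    show F (c 1) - F (c 0) = _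
    rw [h0, h1]
  have key : ∀ t ∈ Icc (0:ℝ) 1, t * K ≤ fderiv ℝ F (c t) v := by
    intro t ht
    have hctm : c t ∈ segment ℝ z (z + v) :=
      (convex_segment z (z + v)).add_smul_mem (left_mem_segment ℝ z (z + v))
        (right_mem_segment ℝ z (z + v)) ht
    have hseg : segment ℝ z (c t) ⊆ segment ℝ z (z + v) :=
      (convex_segment z (z + v)).segment_subset (left_mem_segment ℝ z (z + v)) hctm
    have hmv : ‖gradient F (c t) - gradient F z - T (c t - z)‖ ≤ C * ‖c t - z‖ :=
      Convex.norm_image_sub_le_of_norm_hasFDerivWithin_le'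
        (fun w _ => (hgdiff w).hasFDerivAt.hasFDerivWithinAt)
        (fun w hw => hC w (hseg hw)) (convex_segment _ _)
        (left_mem_segment ℝ z (c t)) (right_mem_segment ℝ z (c t))
    have hctz : c t - z = t • v := by simp [hcdef]
    rw [hctz, hgz, sub_zero, map_smul] at hmv
    have hnorm : ‖t • v‖ = t * ‖v‖ := by
      rw [norm_smul, Real.norm_eq_abs, abs_of_nonneg ht.1]
    rw [hnorm] at hmv
    have hinner : fderiv ℝ F (c t) v = ⟪gradient F (c t), v⟫ := (inner_grad F (c t) v).symm
    have hsplit : (⟪gradient F (c t), v⟫ : ℝ)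
        = ⟪gradient F (c t) - t • T v, v⟫ + t * ⟪T v, v⟫ := by
      rw [inner_sub_left, real_inner_smul_left]; ring
    have habs : |(⟪gradient F (c t) - t • T v, v⟫ : ℝ)| ≤ C * (t * ‖v‖) * ‖v‖ :=
      le_trans (abs_real_inner_le_norm _ _) (mul_le_mul_of_nonneg_right hmv (norm_nonneg v))
    have hvv : ‖v‖ ^ 2 = ‖v‖ * ‖v‖ := sq ‖v‖ ▸ rfl
    rw [hinner, hsplit, hKdef]
    have h2 := (abs_le.mp habs).1
    nlinarith [h2]
  have hlow : K / 2 ≤ ∫ t in (0:ℝ)..1, fderiv ℝ F (c t) v := by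
    have hint1 : IntervalIntegrable (fun t : ℝ => t * K) MeasureTheory.volume 0 1 :=
      (continuous_id.mul continuous_const).intervalIntegrable 0 1
    have hint2 := hcont.intervalIntegrable (μ := MeasureTheory.volume) 0 1
    have h := intervalIntegral.integral_mono_on (by norm_num) hint1 hint2 key
    have heq : ∫ t in (0:ℝ)..1, t * K = K / 2 := by
      rw [intervalIntegral.integral_mul_const, integral_id]; ring
    rw [heq] at h
    exact h
  rw [hFTC] at hlow
  linarith

set_option maxHeartbeats 1600000 in
/-- (Strict minimality lemma.)  If the Riemannian flow `w̃°` converges to a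
strict local minimum `w*` of the squared norm on `M`, then there exists `δ* > 0` such that for
every `δ ∈ (0, δ*)` there exist `ε > 0` and `λ* > 0` such that for every `λ ∈ (0, λ*)`:
`inf_{‖w − w*‖ = δ} F_λ(w) > F* + λ‖w*‖²/2 + λε`. -/
theorem strict_minimality_on_sphere
    {d : ℕ} (F : EuclideanSpace ℝ (Fin d) → ℝ)
    (hF : ContDiff ℝ 3 F)
    (hF3 : LocallyLipschitz (iteratedFDeriv ℝ 3 F))
    (M : Set (EuclideanSpace ℝ (Fin d)))
    (x₀ : EuclideanSpace ℝ (Fin d)) (hx₀ : gradient F x₀ = 0)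
    (hMcc : M = connectedComponentIn {x | gradient F x = 0} x₀)
    (k : ℕ) (hk : k ≤ d)
    (hman : IsSubmanifoldCodim M (d - k))
    (hrank : ∀ x ∈ M,
      Module.finrank ℝ (LinearMap.range (fderiv ℝ (gradient F) x : EuclideanSpace ℝ (Fin d) →ₗ[ℝ] EuclideanSpace ℝ (Fin d))) = d - k)
    (η : ℝ) (hη : 0 < η)
    (heig : ∀ x ∈ M, ∀ μ : ℝ, μ ≠ 0 →
      Module.End.HasEigenvalue
        ((fderiv ℝ (gradient F) x : EuclideanSpace ℝ (Fin d) →L[ℝ] EuclideanSpace ℝ (Fin d))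
          : EuclideanSpace ℝ (Fin d) →ₗ[ℝ] EuclideanSpace ℝ (Fin d)) μ → η ≤ μ)
    (Fstar : ℝ) (hFM : ∀ x ∈ M, F x = Fstar)
    -- the Riemannian flow `w̃°` of the squared norm on `M`
    (wcirc : ℝ → EuclideanSpace ℝ (Fin d))
    (hcirc0 : wcirc 0 ∈ M)
    (hcircM : ∀ t : ℝ, 0 ≤ t → wcirc t ∈ M)
    (hcircode : ∀ t : ℝ, 0 ≤ t → HasDerivAt wcirc
      (-(Submodule.orthogonalProjectionOnto (LinearMap.ker (fderiv ℝ (gradient F) (wcirc t) : EuclideanSpace ℝ (Fin d) →ₗ[ℝ] EuclideanSpace ℝ (Fin d)))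
          (wcirc t) : EuclideanSpace ℝ (Fin d))) t)
    -- `w̃°` converges to a strict local minimum `w*` of the squared norm on `M`
    (wstar : EuclideanSpace ℝ (Fin d)) (hstarM : wstar ∈ M)
    (hcirclim : Tendsto wcirc atTop (𝓝 wstar))
    (hstrict : ∃ V ∈ 𝓝 wstar, ∀ z ∈ M ∩ V, z ≠ wstar → ‖wstar‖ ^ 2 < ‖z‖ ^ 2) :
    ∃ δstar : ℝ, 0 < δstar ∧
      ∀ δ : ℝ, δ ∈ Set.Ioo 0 δstar →
        ∃ ε : ℝ, 0 < ε ∧ ∃ lamstar : ℝ, 0 < lamstar ∧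
          ∀ lam : ℝ, lam ∈ Set.Ioo 0 lamstar →
            ∀ x : EuclideanSpace ℝ (Fin d), ‖x - wstar‖ = δ →
              Fstar + lam * ‖wstar‖ ^ 2 / 2 + lam * ε
                < F x + lam / 2 * ‖x‖ ^ 2 := by
  classical
  obtain ⟨V, hV, hVmin⟩ := hstrict
  obtain ⟨ρ, hρpos, hρV⟩ := Metric.mem_nhds_iff.mp hV
  have hg : ContDiff ℝ 2 (gradient F) := grad_contDiff hF
  have hgdiff : Differentiable ℝ (gradient F) := hg.differentiable (by norm_num)
  have hgM : ∀ x ∈ M, gradient F x = 0 := fun x hx => by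
    have h0 : x ∈ connectedComponentIn {y : EuclideanSpace ℝ (Fin d) | gradient F y = 0} x₀ :=
      hMcc ▸ hx
    exact connectedComponentIn_subset {y : EuclideanSpace ℝ (Fin d) | gradient F y = 0} x₀ h0
  have hMclosed : IsClosed M := by
    have hS : IsClosed {x : EuclideanSpace ℝ (Fin d) | gradient F x = 0} :=
      isClosed_eq hg.continuous continuous_const
    rw [hMcc]
    have hx₀S : x₀ ∈ {x : EuclideanSpace ℝ (Fin d) | gradient F x = 0} := hx₀
    exact isClosed_of_closure_subset
      ((isPreconnected_connectedComponentIn.closure).subset_connectedComponentIn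
        (subset_closure (mem_connectedComponentIn hx₀S))
        (closure_minimal (connectedComponentIn_subset _ _) hS))
  -- Lipschitz bound for the Hessian on the unit ball around `wstar`
  have hH : ContDiff ℝ 1 (fun w => fderiv ℝ (gradient F) w) := hg.fderiv_right (by norm_num)
  obtain ⟨L0, hL0⟩ := (isCompact_closedBall wstar 1).exists_bound_of_continuousOn
      (hH.continuous_fderiv (by norm_num)).continuousOn
  set L := max L0 0 with hLdef
  have hL : 0 ≤ L := le_max_right _ _
  have hLip : ∀ a ∈ Metric.closedBall wstar 1, ∀ b ∈ Metric.closedBall wstar 1,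
      ‖fderiv ℝ (gradient F) a - fderiv ℝ (gradient F) b‖ ≤ L * ‖a - b‖ := by
    intro a ha b hb
    exact (convex_closedBall wstar 1).norm_image_sub_le_of_norm_fderiv_le
      (fun w _ => (hH.differentiable (by norm_num) w))
      (fun w hw => le_trans (hL0 w hw) (le_max_left _ _)) hb ha
  -- nearest points are taken in the compact set `KM`
  set KM := M ∩ Metric.closedBall wstar (1/2) with hKMdef
  have hKMc : IsCompact KM := (isCompact_closedBall _ _).inter_left hMclosed
  have hKMne : KM.Nonempty := ⟨wstar, hstarM, Metric.mem_closedBall_self (by norm_num)⟩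
  -- perpendicularity of nearest-point differences to the kernel of the Hessian
  have hperp : ∀ z ∈ M, ‖z - wstar‖ < 1/2 → ∀ x : EuclideanSpace ℝ (Fin d),
      (∀ y ∈ KM, ‖x - z‖ ≤ ‖x - y‖) →
      x - z ∈ (LinearMap.ker ((fderiv ℝ (gradient F) z :
        EuclideanSpace ℝ (Fin d) →L[ℝ] EuclideanSpace ℝ (Fin d)) :
        EuclideanSpace ℝ (Fin d) →ₗ[ℝ] EuclideanSpace ℝ (Fin d)))ᗮ := by
    intro z hzM hzw x hnear
    obtain ⟨U, f, hUopen, hzU, hfsm, hiff, hsurj⟩ := hman z hzM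
    have hfz : f z = 0 := (hiff z hzU).mp hzM
    have hfC : ContDiffAt ℝ 1 f z := (hfsm.contDiffAt (hUopen.mem_nhds hzU)).of_le (by simp)
    have hstrictf : HasStrictFDerivAt f (fderiv ℝ f z) z := hfC.hasStrictFDerivAt (by norm_num)
    have hrange : (fderiv ℝ f z).range = ⊤ :=
      LinearMap.range_eq_top.mpr (hsurj z ⟨hzU, hzM⟩)
    -- curves inside M with arbitrary velocity in `ker (fderiv f z)`
    have hcurve : ∀ u₀ : (fderiv ℝ f z).ker,
        ∃ c : ℝ → EuclideanSpace ℝ (Fin d), c 0 = z ∧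
          HasDerivAt c (u₀ : EuclideanSpace ℝ (Fin d)) 0 ∧
          (∀ᶠ t in 𝓝 (0:ℝ), c t ∈ M) := by
      intro u₀
      set c : ℝ → EuclideanSpace ℝ (Fin d) :=
        fun t => hstrictf.implicitFunction f (fderiv ℝ f z) hrange (f z) (t • u₀) with hcdef
      have hc0 : c 0 = z := by
        show hstrictf.implicitFunction f (fderiv ℝ f z) hrange (f z) ((0:ℝ) • u₀) = z
        rw [zero_smul]
        exact hstrictf.implicitFunction_apply_image hrange
      have hder : HasDerivAt c (u₀ : EuclideanSpace ℝ (Fin d)) 0 := by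
        have h1 : HasStrictFDerivAt (hstrictf.implicitFunction f (fderiv ℝ f z) hrange (f z))
            ((fderiv ℝ f z).ker).subtypeL 0 := hstrictf.to_implicitFunction hrange
        have h2' : HasDerivAt (fun t : ℝ => t • u₀) u₀ 0 := by
          simpa using (hasDerivAt_id (0:ℝ)).smul_const u₀
        have h3 : HasFDerivAt (hstrictf.implicitFunction f (fderiv ℝ f z) hrange (f z))
            ((fderiv ℝ f z).ker).subtypeL ((fun t : ℝ => t • u₀) 0) := by
          show HasFDerivAt _ _ ((0:ℝ) • u₀)
          rw [zero_smul]
          exact h1.hasFDerivAt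
        have h4 := h3.comp_hasDerivAt 0 h2'
        exact h4
      refine ⟨c, hc0, hder, ?_⟩
      have hmap0 := hstrictf.map_implicitFunction_eq hrange
      have htend : Tendsto (fun t : ℝ => ((f z), t • u₀)) (𝓝 0)
          (𝓝 ((f z), (0 : (fderiv ℝ f z).ker))) := by
        refine Tendsto.prodMk_nhds tendsto_const_nhds ?_
        have h5 : Continuous (fun t : ℝ => t • u₀) := continuous_id.smul continuous_const
        simpa using h5.tendsto 0
      have hfc : ∀ᶠ t in 𝓝 (0:ℝ), f (c t) = f z := htend.eventually hmap0
      have hcU : ∀ᶠ t in 𝓝 (0:ℝ), c t ∈ U :=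
        hder.continuousAt.eventually_mem (hUopen.mem_nhds (by rw [hc0]; exact hzU))
      filter_upwards [hfc, hcU] with t h1 h2
      exact (hiff _ h2).mpr (by rw [h1, hfz])
    -- the kernel of `fderiv f z` is contained in the kernel of the Hessian
    have hkerle : (fderiv ℝ f z).ker ≤
        LinearMap.ker ((fderiv ℝ (gradient F) z :
          EuclideanSpace ℝ (Fin d) →L[ℝ] EuclideanSpace ℝ (Fin d)) :
          EuclideanSpace ℝ (Fin d) →ₗ[ℝ] EuclideanSpace ℝ (Fin d)) := by
      rintro u hu
      obtain ⟨c, hc0, hder, hcM⟩ := hcurve ⟨u, hu⟩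
      have hgc : (fun t => gradient F (c t)) =ᶠ[𝓝 (0:ℝ)]
          (fun _ => (0 : EuclideanSpace ℝ (Fin d))) :=
        hcM.mono fun t ht => hgM _ ht
      have hd1 : HasDerivAt (fun t => gradient F (c t)) (fderiv ℝ (gradient F) (c 0) u) 0 :=
        (hgdiff (c 0)).hasFDerivAt.comp_hasDerivAt 0 hder
      have hd2 : HasDerivAt (fun t => gradient F (c t)) 0 0 :=
        (hasDerivAt_const (0:ℝ) (0 : EuclideanSpace ℝ (Fin d))).congr_of_eventuallyEq hgc
      have h6 := hd1.unique hd2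
      rw [hc0] at h6
      exact LinearMap.mem_ker.mpr (by simpa using h6)
    -- the two kernels have the same dimension, hence coincide
    have hfr2 : Module.finrank ℝ ((fderiv ℝ f z).ker) = k := by
      have h7 := LinearMap.finrank_range_add_finrank_ker
        ((fderiv ℝ f z : EuclideanSpace ℝ (Fin d) →L[ℝ] EuclideanSpace ℝ (Fin (d - k))) :
          EuclideanSpace ℝ (Fin d) →ₗ[ℝ] EuclideanSpace ℝ (Fin (d - k)))
      have hr : LinearMap.range ((fderiv ℝ f z :
          EuclideanSpace ℝ (Fin d) →L[ℝ] EuclideanSpace ℝ (Fin (d - k))) :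
          EuclideanSpace ℝ (Fin d) →ₗ[ℝ] EuclideanSpace ℝ (Fin (d - k))) = ⊤ := hrange
      rw [hr, finrank_top, finrank_euclideanSpace_fin, finrank_euclideanSpace_fin] at h7
      have hker : LinearMap.ker ((fderiv ℝ f z :
          EuclideanSpace ℝ (Fin d) →L[ℝ] EuclideanSpace ℝ (Fin (d - k))) :
          EuclideanSpace ℝ (Fin d) →ₗ[ℝ] EuclideanSpace ℝ (Fin (d - k)))
          = (fderiv ℝ f z).ker := rfl
      rw [hker] at h7
      omega
    have hfr3 : Module.finrank ℝ (LinearMap.ker ((fderiv ℝ (gradient F) z :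
        EuclideanSpace ℝ (Fin d) →L[ℝ] EuclideanSpace ℝ (Fin d)) :
        EuclideanSpace ℝ (Fin d) →ₗ[ℝ] EuclideanSpace ℝ (Fin d))) = k := by
      have h7 := LinearMap.finrank_range_add_finrank_ker
        ((fderiv ℝ (gradient F) z : EuclideanSpace ℝ (Fin d) →L[ℝ] EuclideanSpace ℝ (Fin d)) :
          EuclideanSpace ℝ (Fin d) →ₗ[ℝ] EuclideanSpace ℝ (Fin d))
      have hr : LinearMap.range ((fderiv ℝ (gradient F) z :
          EuclideanSpace ℝ (Fin d) →L[ℝ] EuclideanSpace ℝ (Fin d)) :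
          EuclideanSpace ℝ (Fin d) →ₗ[ℝ] EuclideanSpace ℝ (Fin d))
          = LinearMap.range (fderiv ℝ (gradient F) z : EuclideanSpace ℝ (Fin d) →ₗ[ℝ] EuclideanSpace ℝ (Fin d)) := rfl
      rw [hr, hrank z hzM, finrank_euclideanSpace_fin] at h7
      omega
    have hkereq : (fderiv ℝ f z).ker =
        LinearMap.ker ((fderiv ℝ (gradient F) z :
          EuclideanSpace ℝ (Fin d) →L[ℝ] EuclideanSpace ℝ (Fin d)) :
          EuclideanSpace ℝ (Fin d) →ₗ[ℝ] EuclideanSpace ℝ (Fin d)) :=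
      Submodule.eq_of_le_of_finrank_le hkerle (by rw [hfr2, hfr3])
    -- perpendicularity via the first-order condition for the nearest point
    rw [← hkereq, Submodule.mem_orthogonal]
    intro u hu
    obtain ⟨c, hc0, hder, hcM⟩ := hcurve ⟨u, hu⟩
    have hball : ∀ᶠ t in 𝓝 (0:ℝ), c t ∈ Metric.ball wstar (1/2) :=
      hder.continuousAt.eventually_mem (Metric.isOpen_ball.mem_nhds
        (by rw [hc0, Metric.mem_ball, dist_eq_norm]; exact hzw))
    have hmin : IsLocalMin (fun t => (⟪x - c t, x - c t⟫ : ℝ)) 0 := by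
      filter_upwards [hcM, hball] with t h1 h2
      have h3 : c t ∈ KM := ⟨h1, Metric.ball_subset_closedBall h2⟩
      have h4 : ‖x - z‖ ≤ ‖x - c t‖ := hnear _ h3
      simp only [hc0, real_inner_self_eq_norm_mul_norm]
      exact mul_le_mul h4 h4 (norm_nonneg _) (norm_nonneg _)
    have hd : HasDerivAt (fun t => (⟪x - c t, x - c t⟫ : ℝ))
        (⟪x - c 0, -(u : EuclideanSpace ℝ (Fin d))⟫
          + ⟪-(u : EuclideanSpace ℝ (Fin d)), x - c 0⟫) 0 :=
      HasDerivAt.inner ℝ (hder.const_sub x) (hder.const_sub x)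
    have h8 := hmin.hasDerivAt_eq_zero hd
    rw [hc0] at h8
    have h9 : (⟪x - z, (u : EuclideanSpace ℝ (Fin d))⟫ : ℝ)
        = ⟪(u : EuclideanSpace ℝ (Fin d)), x - z⟫ := real_inner_comm _ _
    simp only [inner_neg_left, inner_neg_right] at h8
    linarith [h8, h9.symm.le]
  -- choice of the radius
  set r := min (min (ρ/2) (1/8)) (η/(8*(L+1))) with hrdef
  have hrpos : 0 < r := by
    refine lt_min (lt_min (by linarith) (by norm_num)) (by positivity)
  have hrρ : r ≤ ρ/2 := le_trans (min_le_left _ _) (min_le_left _ _)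
  have hr8 : r ≤ 1/8 := le_trans (min_le_left _ _) (min_le_right _ _)
  have hrη : r ≤ η/(8*(L+1)) := min_le_right _ _
  -- quadratic growth near `wstar`
  have hQG : ∀ x ∈ Metric.closedBall wstar r, Fstar ≤ F x ∧ (F x = Fstar → x ∈ M) := by
    intro x hxball
    have hx : ‖x - wstar‖ ≤ r := by rwa [Metric.mem_closedBall, dist_eq_norm] at hxball
    obtain ⟨z, hzKM, hzmin⟩ := hKMc.exists_isMinOn hKMne
      ((continuous_const.sub continuous_id).norm.continuousOn
        (f := fun y => ‖x - y‖))
    have hnear : ∀ y ∈ KM, ‖x - z‖ ≤ ‖x - y‖ := fun y hy => isMinOn_iff.mp hzmin y hy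
    obtain ⟨hzM, hzB⟩ := hzKM
    have hwKM : wstar ∈ KM := ⟨hstarM, Metric.mem_closedBall_self (by norm_num)⟩
    have hxz : ‖x - z‖ ≤ r := le_trans (hnear wstar hwKM) hx
    have hzw : ‖z - wstar‖ ≤ 2*r := by
      have h1 : z - wstar = -(x - z) + (x - wstar) := by abel
      calc ‖z - wstar‖ = ‖-(x - z) + (x - wstar)‖ := by rw [h1]
        _ ≤ ‖-(x - z)‖ + ‖x - wstar‖ := norm_add_le _ _
        _ = ‖x - z‖ + ‖x - wstar‖ := by rw [norm_neg]
        _ ≤ 2*r := by linarith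
    have hz2 : ‖z - wstar‖ < 1/2 := by linarith
    have hperp' := hperp z hzM hz2 x hnear
    set v := x - z with hvdef
    have hzv : z + v = x := by rw [hvdef]; abel
    have hspec : η * ‖v‖ ^ 2 ≤ ⟪(fderiv ℝ (gradient F) z) v, v⟫ := by
      have h10 := spectral_bound (hess_symmetric hF z) (heig z hzM) hperp'
      simpa using h10
    -- bound for the Hessian variation along the segment
    have hzb1 : z ∈ Metric.closedBall wstar 1 := by
      rw [Metric.mem_closedBall, dist_eq_norm]; linarith
    have hxb1 : x ∈ Metric.closedBall wstar 1 := by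
      rw [Metric.mem_closedBall, dist_eq_norm]; linarith
    have hCseg : ∀ w ∈ segment ℝ z (z + v),
        ‖fderiv ℝ (gradient F) w - fderiv ℝ (gradient F) z‖ ≤ L * ‖v‖ := by
      intro w hw
      rw [hzv] at hw
      obtain ⟨a, b, ha, hb, hab, rfl⟩ := hw
      have hwz : a • z + b • x - z = b • v := by
        rw [hvdef, show a = 1 - b by linarith]; module
      have hwnorm : ‖a • z + b • x - z‖ ≤ ‖v‖ := by
        rw [hwz, norm_smul, Real.norm_eq_abs, abs_of_nonneg hb]
        nlinarith [norm_nonneg v]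
      have hwball : a • z + b • x ∈ Metric.closedBall wstar 1 :=
        (convex_closedBall wstar 1) hzb1 hxb1 ha hb hab
      calc ‖fderiv ℝ (gradient F) (a • z + b • x) - fderiv ℝ (gradient F) z‖
          ≤ L * ‖a • z + b • x - z‖ := hLip _ hwball _ hzb1
        _ ≤ L * ‖v‖ := mul_le_mul_of_nonneg_left hwnorm hL
    have htay := taylor_lower hF z v (hgM z hzM) hCseg
    rw [hzv, hFM z hzM] at htay
    have hLv : L * ‖v‖ ≤ η/2 := by
      have h1 : ‖v‖ ≤ η/(8*(L+1)) := le_trans hxz hrη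
      have h1' : ‖v‖ * (8*(L+1)) ≤ η := (le_div_iff₀ (by positivity)).mp h1
      have h5 := mul_le_mul_of_nonneg_left h1' hL
      nlinarith [mul_nonneg hL (norm_nonneg v), hη.le]
    have hcube : (L * ‖v‖) * ‖v‖ ^ 2 ≤ (η/2) * ‖v‖ ^ 2 :=
      mul_le_mul_of_nonneg_right hLv (sq_nonneg _)
    have hmain : Fstar + (η/4) * ‖v‖ ^ 2 ≤ F x := by nlinarith [hspec, htay, hcube]
    constructor
    · nlinarith [mul_nonneg (by linarith : (0:ℝ) ≤ η/4) (sq_nonneg ‖v‖)]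
    · intro hFeq
      have hv2 : ‖v‖ ^ 2 ≤ 0 := by nlinarith [hmain]
      have hv0 : v = 0 := by
        have := le_antisymm hv2 (sq_nonneg _)
        have hnv : ‖v‖ = 0 := by nlinarith [norm_nonneg v]
        exact norm_eq_zero.mp hnv
      have hxzeq : x = z := by
        have := sub_eq_zero.mp (hvdef ▸ hv0)
        exact this
      rw [hxzeq]; exact hzM
  -- final assembly
  refine ⟨r, hrpos, ?_⟩
  rintro δ ⟨hδ0, hδr⟩
  rcases (Metric.sphere wstar δ).eq_empty_or_nonempty with hSe | hSne
  · refine ⟨1, one_pos, 1, one_pos, fun lam _ x hxnorm => ?_⟩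
    exfalso
    have : x ∈ Metric.sphere wstar δ := by rw [Metric.mem_sphere, dist_eq_norm]; exact hxnorm
    rw [hSe] at this
    simpa using this
  · set G : EuclideanSpace ℝ (Fin d) → ℝ :=
      fun y => max (F y - Fstar) (‖y‖ ^ 2 - ‖wstar‖ ^ 2) with hGdef
    have hGcont : Continuous G :=
      (hF.continuous.sub continuous_const).max ((continuous_norm.pow 2).sub continuous_const)
    obtain ⟨x₁, hx₁S, hx₁min⟩ := (isCompact_sphere wstar δ).exists_isMinOn hSne
      hGcont.continuousOn
    have hsub : ∀ y ∈ Metric.sphere wstar δ, y ∈ Metric.closedBall wstar r := by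
      intro y hy
      rw [Metric.mem_sphere] at hy
      rw [Metric.mem_closedBall, hy]
      linarith
    have hcpos : 0 < G x₁ := by
      have hx₁r := hsub x₁ hx₁S
      rcases lt_or_eq_of_le ((hQG x₁ hx₁r).1) with hlt | heq
      · exact lt_max_of_lt_left (by linarith)
      · have hx₁M : x₁ ∈ M := (hQG x₁ hx₁r).2 heq.symm
        have hx₁V : x₁ ∈ V := by
          apply hρV
          rw [Metric.mem_ball]
          rw [Metric.mem_sphere] at hx₁S
          linarith
        have hx₁ne : x₁ ≠ wstar := by
          intro h
          rw [Metric.mem_sphere, h, dist_self] at hx₁S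
          linarith
        have := hVmin x₁ ⟨hx₁M, hx₁V⟩ hx₁ne
        exact lt_max_of_lt_right (by linarith)
    set cg := G x₁ with hcgdef
    set B := δ * (2 * ‖wstar‖ + δ) + 1 with hBdef
    have hBpos : 0 < B := by nlinarith [norm_nonneg wstar]
    refine ⟨cg/4, by linarith, cg/(B+cg), by positivity, ?_⟩
    rintro lam ⟨hlam0, hlam1⟩ x hxnorm
    have hxS : x ∈ Metric.sphere wstar δ := by
      rw [Metric.mem_sphere, dist_eq_norm]; exact hxnorm
    have hGx : cg ≤ G x := isMinOn_iff.mp hx₁min x hxS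
    have hFx : Fstar ≤ F x := (hQG x (hsub x hxS)).1
    have habs : |‖x‖ ^ 2 - ‖wstar‖ ^ 2| ≤ B := by
      have h1 : |‖x‖ - ‖wstar‖| ≤ δ := by
        rw [← hxnorm]; exact abs_norm_sub_norm_le x wstar
      have h2 := abs_le.mp h1
      rw [abs_le]
      constructor <;> nlinarith [norm_nonneg x, norm_nonneg wstar]
    have hlamB : lam * (B + cg) < cg := (lt_div_iff₀ (by positivity)).mp hlam1
    have h2 := abs_le.mp habs
    rcases le_max_iff.mp hGx with hcase | hcase
    · nlinarith [mul_le_mul_of_nonneg_left h2.1 hlam0.le,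
        mul_nonneg hlam0.le hcpos.le, mul_nonneg hlam0.le hBpos.le]
    · nlinarith [mul_le_mul_of_nonneg_left hcase hlam0.le, mul_pos hlam0 hcpos]
end

section
/- Let X ∈ ℝ^{n×d} with n ≤ d and rank(X) = n, y ∈ ℝ^n, and define H : ℝ^{2d} → ℝ^d by H(u, v) = Xᵀ(X(u² − v²) − y), where u², v² denote componentwise squares. Let (ū, v̄) ∈ ℝ^{2d} have all coordinates nonzero and satisfy H(ū, v̄) = 0. Then the differential of H at (ū, v̄), given by DH(ū, v̄)[Δu, Δv] = 2XᵀX(ū ⊙ Δu − v̄ ⊙ Δv) (with ⊙ the componentwise product), has rank n; in particular the map (Δu, Δv) ↦ ū ⊙ Δu − v̄ ⊙ Δv is surjective onto ℝ^d, and consequently the set M* = {(u,v) ∈ (ℝ\{0})^{2d} : ∇F(u,v)=0} for F(u,v) = ‖X(u²−v²) − y‖₂² is a smooth manifold of dimension 2d − n. -/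
open Set Filter Topology Matrix

variable {n d : ℕ} (X : Matrix (Fin n) (Fin d) ℝ) (y : Fin n → ℝ)

noncomputable def Acl (X : Matrix (Fin n) (Fin d) ℝ) : (Fin d → ℝ) →L[ℝ] (Fin n → ℝ) :=
  LinearMap.toContinuousLinearMap X.mulVecLin

noncomputable def Dsq (p : (Fin d → ℝ) × (Fin d → ℝ)) :
    ((Fin d → ℝ) × (Fin d → ℝ)) →L[ℝ] (Fin d → ℝ) :=
  (p.1 • ContinuousLinearMap.fst ℝ (Fin d → ℝ) (Fin d → ℝ)
    + (ContinuousLinearMap.fst ℝ (Fin d → ℝ) (Fin d → ℝ)).smulRight p.1)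
  - (p.2 • ContinuousLinearMap.snd ℝ (Fin d → ℝ) (Fin d → ℝ)
    + (ContinuousLinearMap.snd ℝ (Fin d → ℝ) (Fin d → ℝ)).smulRight p.2)

lemma hasFDerivAt_sq (p : (Fin d → ℝ) × (Fin d → ℝ)) :
    HasFDerivAt (fun q : (Fin d → ℝ) × (Fin d → ℝ) => q.1 * q.1 - q.2 * q.2) (Dsq p) p := by
  exact (hasFDerivAt_fst.mul' hasFDerivAt_fst).sub (hasFDerivAt_snd.mul' hasFDerivAt_snd)

lemma Dsq_apply (p Δ : (Fin d → ℝ) × (Fin d → ℝ)) :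
    Dsq p Δ = p.1 * Δ.1 + Δ.1 * p.1 - (p.2 * Δ.2 + Δ.2 * p.2) := by
  simp [Dsq, smul_eq_mul]

noncomputable def cder (p : (Fin d → ℝ) × (Fin d → ℝ)) :
    ((Fin d → ℝ) × (Fin d → ℝ)) →L[ℝ] ℝ :=
  ∑ i : Fin n, ((2 : ℝ) * (X *ᵥ (p.1 * p.1 - p.2 * p.2) - y) i) •
    ((ContinuousLinearMap.proj i).comp ((Acl X).comp (Dsq p)))

lemma hasFDerivAt_g (p : (Fin d → ℝ) × (Fin d → ℝ)) :
    HasFDerivAt (fun q : (Fin d → ℝ) × (Fin d → ℝ) =>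
      X *ᵥ (q.1 * q.1 - q.2 * q.2) - y) ((Acl X).comp (Dsq p)) p := by
  have := ((Acl X).hasFDerivAt.comp p (hasFDerivAt_sq p)).sub_const y
  simpa [Acl, Function.comp] using this

lemma hasFDerivAt_F (p : (Fin d → ℝ) × (Fin d → ℝ)) :
    HasFDerivAt (fun q : (Fin d → ℝ) × (Fin d → ℝ) =>
      ∑ i, (X *ᵥ (q.1 * q.1 - q.2 * q.2) - y) i ^ 2) (cder X y p) p := by
  have hg := hasFDerivAt_g X y p
  have hgi : ∀ i : Fin n, HasFDerivAt (fun q : (Fin d → ℝ) × (Fin d → ℝ) =>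
      (X *ᵥ (q.1 * q.1 - q.2 * q.2) - y) i ^ 2)
      (((2 : ℝ) * (X *ᵥ (p.1 * p.1 - p.2 * p.2) - y) i) •
        ((ContinuousLinearMap.proj i).comp ((Acl X).comp (Dsq p)))) p := by
    intro i
    have h1 : HasFDerivAt (fun q : (Fin d → ℝ) × (Fin d → ℝ) =>
        (X *ᵥ (q.1 * q.1 - q.2 * q.2) - y) i)
        ((ContinuousLinearMap.proj i).comp ((Acl X).comp (Dsq p))) p := by
      have := (ContinuousLinearMap.proj (R := ℝ) (φ := fun _ : Fin n => ℝ) i).hasFDerivAt.comp p hg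
      exact this
    have h2 := h1.mul h1
    have : (fun q : (Fin d → ℝ) × (Fin d → ℝ) =>
        (X *ᵥ (q.1 * q.1 - q.2 * q.2) - y) i ^ 2)
      = fun q => (X *ᵥ (q.1 * q.1 - q.2 * q.2) - y) i * (X *ᵥ (q.1 * q.1 - q.2 * q.2) - y) i := by
      funext q; ring
    rw [this, two_mul, add_smul]
    exact h2
  simpa [cder] using HasFDerivAt.fun_sum (fun i _ => hgi i)

lemma cder_apply (p Δ : (Fin d → ℝ) × (Fin d → ℝ)) :
    cder X y p Δ = ∑ i, (2 : ℝ) * (X *ᵥ (p.1 * p.1 - p.2 * p.2) - y) i *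
      (X *ᵥ (p.1 * Δ.1 + Δ.1 * p.1 - (p.2 * Δ.2 + Δ.2 * p.2))) i := by
  simp [cder, Dsq_apply, Acl, mul_comm]

lemma cder_eq_zero_iff (p : (Fin d → ℝ) × (Fin d → ℝ)) (hp1 : ∀ i, p.1 i ≠ 0) :
    cder X y p = 0 ↔ Xᵀ *ᵥ (X *ᵥ (p.1 * p.1 - p.2 * p.2) - y) = 0 := by
  set r := X *ᵥ (p.1 * p.1 - p.2 * p.2) - y with hr
  constructor
  · intro h
    funext j
    have h0 := congrArg (fun L => L ((Pi.single j 1 : Fin d → ℝ), (0 : Fin d → ℝ))) h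
    simp only [ContinuousLinearMap.zero_apply] at h0
    rw [cder_apply] at h0
    have hw : (p.1 * Pi.single j 1 + Pi.single j 1 * p.1 - (p.2 * 0 + 0 * p.2) : Fin d → ℝ)
        = Pi.single j (2 * p.1 j) := by
      funext k
      by_cases hk : k = j <;> simp [hk, Pi.single_apply, two_mul]
    rw [hw] at h0
    have hXv : ∀ i, (X *ᵥ Pi.single j (2 * p.1 j)) i = X i j * (2 * p.1 j) := by
      intro i
      simp [mulVec, dotProduct, Pi.single_apply]
    simp only [hXv] at h0
    have h1 : (4 * p.1 j) * ∑ i, X i j * r i = 0 := by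
      rw [Finset.mul_sum]
      rw [← h0]
      apply Finset.sum_congr rfl
      intro i _
      ring
    have h2 : ∑ i, X i j * r i = 0 :=
      by
        rcases mul_eq_zero.mp h1 with h | h
        · exact absurd h (by simpa using hp1 j)
        · exact h
    simpa [Matrix.mulVec, dotProduct, transpose_apply, Pi.zero_apply] using h2
  · intro h
    apply ContinuousLinearMap.ext
    intro Δ
    rw [cder_apply]
    show _ = (0 : ((Fin d → ℝ) × (Fin d → ℝ)) →L[ℝ] ℝ) Δ
    rw [ContinuousLinearMap.zero_apply]
    have : ∑ i, (2:ℝ) * r i * (X *ᵥ (p.1 * Δ.1 + Δ.1 * p.1 - (p.2 * Δ.2 + Δ.2 * p.2))) i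
        = 2 * (r ⬝ᵥ X *ᵥ (p.1 * Δ.1 + Δ.1 * p.1 - (p.2 * Δ.2 + Δ.2 * p.2))) := by
      simp [dotProduct, Finset.mul_sum, mul_assoc]
    rw [this, dotProduct_mulVec, ← mulVec_transpose, h]
    simp

lemma X_surj (hXrank : X.rank = n) : Function.Surjective X.mulVecLin := by
  rw [← LinearMap.range_eq_top]
  apply Submodule.eq_top_of_finrank_eq
  rw [Module.finrank_pi]
  simpa [Matrix.rank] using hXrank

lemma Xt_inj (hXrank : X.rank = n) : Function.Injective Xᵀ.mulVecLin := by
  rw [← LinearMap.ker_eq_bot]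
  rw [← Submodule.finrank_eq_zero (R := ℝ)]
  have h := LinearMap.finrank_range_add_finrank_ker Xᵀ.mulVecLin
  have hr : Module.finrank ℝ (LinearMap.range Xᵀ.mulVecLin) = n := by
    have := Matrix.rank_transpose X
    rw [hXrank] at this
    simpa [Matrix.rank] using this
  rw [hr, Module.finrank_pi, Fintype.card_fin] at h
  omega

lemma Dsq_surj (p : (Fin d → ℝ) × (Fin d → ℝ)) (hp1 : ∀ i, p.1 i ≠ 0) :
    Function.Surjective ⇑(Dsq (d := d) p) := by
  intro w
  refine ⟨((fun i => w i / (2 * p.1 i)), 0), ?_⟩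
  rw [Dsq_apply]
  funext i
  have := hp1 i
  simp only [Pi.add_apply, Pi.sub_apply, Pi.mul_apply, Pi.zero_apply]
  field_simp
  ring


/-- (Diagonal linear networks.)  Let `X ∈ ℝ^{n×d}` with `n ≤ d` and
`rank X = n`, `H(u,v) = Xᵀ(X(u² − v²) − y)`, and let `(ū, v̄)` with all coordinates nonzero
satisfy `H(ū, v̄) = 0`.  Then the differential `DH(ū,v̄)[Δu,Δv] = 2XᵀX(ū ⊙ Δu − v̄ ⊙ Δv)` has
rank `n`; the map `(Δu, Δv) ↦ ū ⊙ Δu − v̄ ⊙ Δv` is surjective; and the set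
`M* = {(u,v) ∈ (ℝ∖{0})^{2d} : ∇F(u,v) = 0}` with `F(u,v) = ‖X(u²−v²) − y‖₂²` is a smooth
manifold of dimension `2d − n` (i.e. of codimension `n`). -/
theorem diagonal_linear_network_manifold
    {n d : ℕ} (hnd : n ≤ d)
    (X : Matrix (Fin n) (Fin d) ℝ) (hXrank : X.rank = n)
    (y : Fin n → ℝ)
    (ubar vbar : Fin d → ℝ)
    (hu : ∀ i, ubar i ≠ 0) (hv : ∀ i, vbar i ≠ 0)
    (hcrit : Xᵀ *ᵥ (X *ᵥ (ubar * ubar - vbar * vbar) - y) = 0) :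
    Function.Surjective
      (fun p : (Fin d → ℝ) × (Fin d → ℝ) => ubar * p.1 - vbar * p.2) ∧
    Module.finrank ℝ (LinearMap.range
      ((2 : ℝ) • ((Xᵀ.mulVecLin.comp X.mulVecLin).comp
        (((LinearMap.mulLeft ℝ ubar).comp
            (LinearMap.fst ℝ (Fin d → ℝ) (Fin d → ℝ))) -
          ((LinearMap.mulLeft ℝ vbar).comp
            (LinearMap.snd ℝ (Fin d → ℝ) (Fin d → ℝ))))))) = n ∧
    IsSubmanifoldCodim
      {p : (Fin d → ℝ) × (Fin d → ℝ) |
        (∀ i, p.1 i ≠ 0) ∧ (∀ i, p.2 i ≠ 0) ∧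
        fderiv ℝ (fun q : (Fin d → ℝ) × (Fin d → ℝ) =>
          ∑ i, (X *ᵥ (q.1 * q.1 - q.2 * q.2) - y) i ^ 2) p = 0}
      n := by
  have hsurj1 : Function.Surjective
      (fun p : (Fin d → ℝ) × (Fin d → ℝ) => ubar * p.1 - vbar * p.2) := by
    intro z
    refine ⟨((fun i => z i / ubar i), 0), ?_⟩
    funext i
    have := hu i
    simp only [Pi.sub_apply, Pi.mul_apply, Pi.zero_apply, mul_zero, sub_zero]
    field_simp
  refine ⟨hsurj1, ?_, ?_⟩
  · rw [LinearMap.range_smul _ 2 two_ne_zero]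
    have hLtop : LinearMap.range
        (((LinearMap.mulLeft ℝ ubar).comp (LinearMap.fst ℝ (Fin d → ℝ) (Fin d → ℝ))) -
          ((LinearMap.mulLeft ℝ vbar).comp (LinearMap.snd ℝ (Fin d → ℝ) (Fin d → ℝ)))) = ⊤ := by
      rw [LinearMap.range_eq_top]
      have : ⇑(((LinearMap.mulLeft ℝ ubar).comp (LinearMap.fst ℝ (Fin d → ℝ) (Fin d → ℝ))) -
          ((LinearMap.mulLeft ℝ vbar).comp (LinearMap.snd ℝ (Fin d → ℝ) (Fin d → ℝ))))
          = fun p : (Fin d → ℝ) × (Fin d → ℝ) => ubar * p.1 - vbar * p.2 := by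
        funext p; simp [LinearMap.mulLeft_apply]
      rw [this]; exact hsurj1
    rw [LinearMap.range_comp_of_range_eq_top _ hLtop, ← Matrix.mulVecLin_mul]
    have h2 : (Xᵀ * X).rank = n := by rw [Matrix.rank_transpose_mul_self, hXrank]
    simpa [Matrix.rank] using h2
  · intro x hx
    set U : Set ((Fin d → ℝ) × (Fin d → ℝ)) :=
      {p | (∀ i, p.1 i ≠ 0) ∧ (∀ i, p.2 i ≠ 0)} with hU
    have hUopen : IsOpen U := by
      have h1 : U = (⋂ i, {p : (Fin d → ℝ) × (Fin d → ℝ) | p.1 i ≠ 0}) ∩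
          (⋂ i, {p : (Fin d → ℝ) × (Fin d → ℝ) | p.2 i ≠ 0}) := by
        ext p; simp [hU, Set.mem_iInter]
      rw [h1]
      apply IsOpen.inter
      · exact isOpen_iInter_of_finite fun i =>
          isOpen_ne.preimage ((continuous_apply i).comp continuous_fst)
      · exact isOpen_iInter_of_finite fun i =>
          isOpen_ne.preimage ((continuous_apply i).comp continuous_snd)
    set e := (EuclideanSpace.equiv (Fin n) ℝ).symm
    have hginj : Function.Injective Xᵀ.mulVecLin := Xt_inj X hXrank
    refine ⟨U, fun q => e (X *ᵥ (q.1 * q.1 - q.2 * q.2) - y), hUopen, ⟨hx.1, hx.2.1⟩, ?_, ?_, ?_⟩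
    · apply ContDiff.contDiffOn
      have hgsm : ContDiff ℝ (⊤ : ℕ∞) (fun q : (Fin d → ℝ) × (Fin d → ℝ) =>
          X *ᵥ (q.1 * q.1 - q.2 * q.2) - y) := by
        have hsq : ContDiff ℝ (⊤ : ℕ∞) (fun q : (Fin d → ℝ) × (Fin d → ℝ) => q.1 * q.1 - q.2 * q.2) :=
          (contDiff_fst.mul contDiff_fst).sub (contDiff_snd.mul contDiff_snd)
        have := ((Acl X).contDiff.comp hsq).sub (contDiff_const (c := y))
        simpa [Acl, Function.comp] using this
      exact (e.toContinuousLinearMap.contDiff).comp hgsm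
    · intro q hq
      have hfd : fderiv ℝ (fun q : (Fin d → ℝ) × (Fin d → ℝ) =>
          ∑ i, (X *ᵥ (q.1 * q.1 - q.2 * q.2) - y) i ^ 2) q = cder X y q :=
        (hasFDerivAt_F X y q).fderiv
      have h1 : cder X y q = 0 ↔ Xᵀ *ᵥ (X *ᵥ (q.1 * q.1 - q.2 * q.2) - y) = 0 :=
        cder_eq_zero_iff X y q hq.1
      have h2 : Xᵀ *ᵥ (X *ᵥ (q.1 * q.1 - q.2 * q.2) - y) = 0 ↔
          X *ᵥ (q.1 * q.1 - q.2 * q.2) - y = 0 := by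
        constructor
        · intro h
          apply hginj
          rw [Matrix.mulVecLin_apply, Matrix.mulVecLin_apply, h, Matrix.mulVec_zero]
        · intro h
          rw [h]
          simp [Matrix.mulVec_zero]
      constructor
      · rintro ⟨-, -, hcr⟩
        rw [hfd, h1, h2] at hcr
        show e (X *ᵥ (q.1 * q.1 - q.2 * q.2) - y) = 0
        rw [hcr]
        simp
      · intro hfq
        have hz : X *ᵥ (q.1 * q.1 - q.2 * q.2) - y = 0 := by
          have := congrArg (⇑(EuclideanSpace.equiv (Fin n) ℝ)) hfq
          exact e.injective (by rw [map_zero]; exact hfq)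
        exact ⟨hq.1, hq.2, by rw [hfd, h1, h2]; exact hz⟩
    · intro q hq
      have hgd := hasFDerivAt_g X y q
      have hf : HasFDerivAt (fun q : (Fin d → ℝ) × (Fin d → ℝ) =>
          e (X *ᵥ (q.1 * q.1 - q.2 * q.2) - y))
          (e.toContinuousLinearMap.comp ((Acl X).comp (Dsq q))) q :=
        e.toContinuousLinearMap.hasFDerivAt.comp q hgd
      rw [hf.fderiv]
      have hAsurj : Function.Surjective ⇑(Acl X) := by
        have : ⇑(Acl X) = ⇑X.mulVecLin := rfl
        rw [this]; exact X_surj X hXrank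
      have hDsurj : Function.Surjective ⇑(Dsq q) := Dsq_surj q hq.1.1
      simp only [ContinuousLinearMap.coe_comp']
      exact (e.surjective.comp hAsurj).comp hDsurj
end

section
/- Let W ∈ ℝ^{n×n} be invertible. Then the linear map φ : ℝ^{n×n} → Sym_n(ℝ) defined by φ(U) = WUᵀ + UWᵀ is surjective onto the space of symmetric n×n real matrices (indeed for any symmetric Z, U = ½ Z (W⁻¹)ᵀ satisfies φ(U) = Z). Consequently, for any linear map 𝒜 : Sym_n(ℝ) → ℝ^m with adjoint 𝒜*, the linear map U ↦ 𝒜*(𝒜(WUᵀ + UWᵀ)) has rank equal to the rank of 𝒜*𝒜, and the set M* of invertible critical points of F(W) = ‖𝒜(WWᵀ) − y‖₂² is a smooth manifold. -/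
open Set Filter Topology Matrix

attribute [local instance] Matrix.normedAddCommGroup Matrix.normedSpace

/-- A set `M` in a real normed space is a smooth (embedded, `C^∞`) submanifold if around every
point of `M` there is a local defining function which is a submersion on `M`. -/
def IsSmoothSubmanifold {E : Type*} [NormedAddCommGroup E] [NormedSpace ℝ E]
    (M : Set E) : Prop :=
  ∀ x ∈ M, ∃ (k : ℕ) (U : Set E) (f : E → EuclideanSpace ℝ (Fin k)),
    IsOpen U ∧ x ∈ U ∧ ContDiffOn ℝ (⊤ : ℕ∞) f U ∧
    (∀ y ∈ U, (y ∈ M ↔ f y = 0)) ∧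
    ∀ y ∈ U ∩ M, Function.Surjective (fderiv ℝ f y)

/-- The symmetric matrix `W Wᵀ`, as an element of the submodule of symmetric matrices. -/
noncomputable def symSq {n : ℕ} (W : Matrix (Fin n) (Fin n) ℝ) :
    selfAdjoint.submodule ℝ (Matrix (Fin n) (Fin n) ℝ) :=
  ⟨W * Wᵀ, by
    show star (W * Wᵀ) = W * Wᵀ
    simp [Matrix.star_eq_conjTranspose, Matrix.conjTranspose_mul,
      Matrix.conjTranspose_eq_transpose_of_trivial]⟩

/-- The linear map `U ↦ W Uᵀ + U Wᵀ`, with values in the symmetric matrices. -/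
noncomputable def phiMap {n : ℕ} (W : Matrix (Fin n) (Fin n) ℝ) :
    Matrix (Fin n) (Fin n) ℝ →ₗ[ℝ] selfAdjoint.submodule ℝ (Matrix (Fin n) (Fin n) ℝ) where
  toFun U := ⟨W * Uᵀ + U * Wᵀ, by
    show star (W * Uᵀ + U * Wᵀ) = W * Uᵀ + U * Wᵀ
    simp [Matrix.star_eq_conjTranspose, Matrix.conjTranspose_mul,
      Matrix.conjTranspose_eq_transpose_of_trivial, add_comm]⟩
  map_add' U V := by
    apply Subtype.ext
    simp [Matrix.transpose_add, Matrix.mul_add, Matrix.add_mul]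
    abel
  map_smul' c U := by
    apply Subtype.ext
    simp [Matrix.transpose_smul, Matrix.mul_smul, Matrix.smul_mul]

/-- The matrix sensing loss `F(W) = ‖𝒜(W Wᵀ) − y‖₂²`. -/
noncomputable def sensingLoss {n m : ℕ}
    (A : selfAdjoint.submodule ℝ (Matrix (Fin n) (Fin n) ℝ) →ₗ[ℝ] (Fin m → ℝ))
    (y : Fin m → ℝ) (W : Matrix (Fin n) (Fin n) ℝ) : ℝ :=
  ∑ i, (A (symSq W) i - y i) ^ 2

section Aux
variable {n m : ℕ}

local notation "Mat" => Matrix (Fin n) (Fin n) ℝ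
local notation "SymE" => selfAdjoint.submodule ℝ (Matrix (Fin n) (Fin n) ℝ)

noncomputable def sLin (n : ℕ) : Matrix (Fin n) (Fin n) ℝ →ₗ[ℝ] selfAdjoint.submodule ℝ (Matrix (Fin n) (Fin n) ℝ) where
  toFun X := ⟨(2⁻¹ : ℝ) • (X + Xᵀ), by
    show star ((2⁻¹ : ℝ) • (X + Xᵀ)) = (2⁻¹ : ℝ) • (X + Xᵀ)
    simp [Matrix.star_eq_conjTranspose, Matrix.conjTranspose_eq_transpose_of_trivial, add_comm]⟩
  map_add' X Y := by
    apply Subtype.ext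
    simp [Matrix.transpose_add, smul_add]
    abel
  map_smul' c X := by
    apply Subtype.ext
    simp [Matrix.transpose_smul, smul_add, smul_comm c]

lemma coe_symm (Z : SymE) : (Z : Mat)ᵀ = (Z : Mat) := by
  have h0 : star (Z : Mat) = (Z : Mat) := Z.2
  rwa [Matrix.star_eq_conjTranspose, Matrix.conjTranspose_eq_transpose_of_trivial] at h0

lemma sLin_symm (X : Mat) (hX : Xᵀ = X) : sLin n X = ⟨X, by
    show star X = X
    rwa [Matrix.star_eq_conjTranspose, Matrix.conjTranspose_eq_transpose_of_trivial]⟩ := by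
  apply Subtype.ext
  show (2⁻¹ : ℝ) • (X + Xᵀ) = X
  rw [hX, ← two_smul ℝ X, smul_smul]; norm_num

lemma sLin_coe (Z : SymE) : sLin n (Z : Mat) = Z := by
  rw [sLin_symm _ (coe_symm Z)]

lemma sLin_sq (W : Mat) : sLin n (W * Wᵀ) = symSq W := by
  rw [show symSq W = (⟨W * Wᵀ, (symSq W).2⟩ : SymE) from rfl]
  exact sLin_symm _ (by rw [Matrix.transpose_mul, Matrix.transpose_transpose])

lemma sLin_phi (W U : Mat) : sLin n (W * Uᵀ + U * Wᵀ) = phiMap W U := by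
  rw [show phiMap W U = (⟨W * Uᵀ + U * Wᵀ, (phiMap W U).2⟩ : SymE) from rfl]
  refine sLin_symm _ ?_
  simp [Matrix.transpose_add, Matrix.transpose_mul, Matrix.transpose_transpose, add_comm]

noncomputable def phiCLM (W : Mat) : Mat →L[ℝ] Mat :=
  LinearMap.toContinuousLinearMap
    ((selfAdjoint.submodule ℝ (Matrix (Fin n) (Fin n) ℝ)).subtype ∘ₗ phiMap W)

@[simp] lemma phiCLM_apply (W U : Mat) : phiCLM W U = W * Uᵀ + U * Wᵀ := by
  simp [phiCLM]
  rfl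

noncomputable def mulCLM (n : ℕ) :
    Matrix (Fin n) (Fin n) ℝ →L[ℝ] Matrix (Fin n) (Fin n) ℝ →L[ℝ] Matrix (Fin n) (Fin n) ℝ :=
  LinearMap.toContinuousLinearMap
    (LinearMap.toContinuousLinearMap.toLinearMap ∘ₗ LinearMap.mul ℝ (Matrix (Fin n) (Fin n) ℝ))

@[simp] lemma mulCLM_apply (X Y : Mat) : mulCLM n X Y = X * Y := by
  simp [mulCLM]

noncomputable def tCLM (n : ℕ) : Matrix (Fin n) (Fin n) ℝ →L[ℝ] Matrix (Fin n) (Fin n) ℝ :=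
  LinearMap.toContinuousLinearMap (Matrix.transposeLinearEquiv (Fin n) (Fin n) ℝ ℝ).toLinearMap

@[simp] lemma tCLM_apply (X : Mat) : tCLM n X = Xᵀ := by
  simp [tCLM, Matrix.transposeLinearEquiv, Matrix.transposeAddEquiv]

lemma contDiff_sq : ContDiff ℝ (⊤ : ℕ∞) (fun X : Mat => X * Xᵀ) := by
  have h1 : ContDiff ℝ (⊤ : ℕ∞) (fun p : Mat × Mat => mulCLM n p.1 p.2) :=
    (mulCLM n).isBoundedBilinearMap.contDiff
  have h2 : ContDiff ℝ (⊤ : ℕ∞) (fun X : Mat => (X, tCLM n X)) :=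
    contDiff_id.prodMk (tCLM n).contDiff
  have := h1.comp h2
  simpa [Function.comp_def] using this

lemma hasFDerivAt_sq_s14 (W : Mat) :
    HasFDerivAt (fun X : Mat => X * Xᵀ) (phiCLM W) W := by
  have h1 := ((mulCLM n).isBoundedBilinearMap.hasFDerivAt (W, tCLM n W)).comp W
    ((ContinuousLinearMap.id ℝ Mat).prod (tCLM n)).hasFDerivAt
  have heq : (fun X : Mat => X * Xᵀ)
      = (fun p : Mat × Mat => mulCLM n p.1 p.2) ∘ fun X => ((ContinuousLinearMap.id ℝ Mat).prod (tCLM n)) X := by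
    funext X; simp
  rw [heq]
  have h2 : ((mulCLM n).isBoundedBilinearMap.deriv (W, tCLM n W)).comp
      ((ContinuousLinearMap.id ℝ Mat).prod (tCLM n)) = phiCLM W := by
    apply ContinuousLinearMap.ext
    intro U
    have h3 := (mulCLM n).isBoundedBilinearMap.deriv_apply (W, tCLM n W) (U, tCLM n U)
    simp only [mulCLM_apply, tCLM_apply] at h3
    refine h3.trans ?_
    exact (phiCLM_apply W U).symm
  rw [← h2]
  exact h1

end Aux

section Loss
variable {n m : ℕ}
local notation "Mat" => Matrix (Fin n) (Fin n) ℝ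
local notation "SymE" => selfAdjoint.submodule ℝ (Matrix (Fin n) (Fin n) ℝ)

noncomputable def ellCLM (A : SymE →ₗ[ℝ] (Fin m → ℝ)) (i : Fin m) : Mat →L[ℝ] ℝ :=
  LinearMap.toContinuousLinearMap ((LinearMap.proj i) ∘ₗ (A ∘ₗ sLin n))

@[simp] lemma ellCLM_apply (A : SymE →ₗ[ℝ] (Fin m → ℝ)) (i : Fin m) (X : Mat) :
    ellCLM A i X = A (sLin n X) i := by
  simp [ellCLM]

lemma hasFDerivAt_loss (A : SymE →ₗ[ℝ] (Fin m → ℝ)) (y : Fin m → ℝ) (W : Mat) :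
    HasFDerivAt (sensingLoss A y)
      (∑ i, (2 * (A (symSq W) i - y i)) • ((ellCLM A i).comp (phiCLM W))) W := by
  have hfun : sensingLoss A y = fun X => ∑ i, (ellCLM A i (X * Xᵀ) - y i) ^ 2 := by
    funext X
    unfold sensingLoss
    refine Finset.sum_congr rfl fun i _ => ?_
    rw [ellCLM_apply, sLin_sq]
  rw [hfun]
  apply HasFDerivAt.fun_sum
  intro i _
  have hg : HasFDerivAt (fun X : Mat => ellCLM A i (X * Xᵀ) - y i)
      ((ellCLM A i).comp (phiCLM W)) W :=
    ((ellCLM A i).hasFDerivAt.comp W (hasFDerivAt_sq_s14 W)).sub_const (y i)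
  have h2 := hg.mul hg
  have hc : ellCLM A i (W * Wᵀ) - y i = A (symSq W) i - y i := by
    rw [ellCLM_apply, sLin_sq]
  simp only [pow_two]
  rw [two_mul, add_smul, ← hc]
  exact h2

lemma fderiv_loss_apply (A : SymE →ₗ[ℝ] (Fin m → ℝ)) (y : Fin m → ℝ) (W U : Mat) :
    fderiv ℝ (sensingLoss A y) W U
      = 2 * ((A (phiMap W U)) ⬝ᵥ (fun i => A (symSq W) i - y i)) := by
  rw [(hasFDerivAt_loss A y W).fderiv]
  rw [ContinuousLinearMap.sum_apply]
  rw [dotProduct, Finset.mul_sum]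
  refine Finset.sum_congr rfl fun i _ => ?_
  rw [ContinuousLinearMap.smul_apply, ContinuousLinearMap.comp_apply, ellCLM_apply, phiCLM_apply,
    sLin_phi]
  simp [mul_comm, mul_left_comm, mul_assoc]

end Loss

section Crit
variable {n m : ℕ}
local notation "Mat" => Matrix (Fin n) (Fin n) ℝ
local notation "SymE" => selfAdjoint.submodule ℝ (Matrix (Fin n) (Fin n) ℝ)

theorem part1 (W : Mat) (hW : IsUnit W) (Z : Mat) (hZ : Zᵀ = Z) :
    W * ((2⁻¹ : ℝ) • (Z * (W⁻¹)ᵀ))ᵀ + ((2⁻¹ : ℝ) • (Z * (W⁻¹)ᵀ)) * Wᵀ = Z := by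
  have h1 : W * W⁻¹ = 1 := Matrix.mul_nonsing_inv W ((Matrix.isUnit_iff_isUnit_det W).mp hW)
  have h2 : (W⁻¹)ᵀ * Wᵀ = 1 := by rw [← Matrix.transpose_mul, h1, Matrix.transpose_one]
  rw [Matrix.transpose_smul, Matrix.transpose_mul, Matrix.transpose_transpose, hZ]
  rw [Matrix.mul_smul, Matrix.smul_mul, ← Matrix.mul_assoc, h1, Matrix.one_mul,
    Matrix.mul_assoc, h2, Matrix.mul_one]
  rw [← smul_add, ← two_smul ℝ Z, smul_smul]
  norm_num

theorem trace_sq_eq_zero (S : Mat) (hS : Sᵀ = S)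
    (h : (S * S).trace = 0) : S = 0 := by
  have key : (S * S).trace = ∑ i, ∑ j, S i j ^ 2 := by
    simp only [Matrix.trace, Matrix.diag, Matrix.mul_apply]
    refine Finset.sum_congr rfl fun i _ => Finset.sum_congr rfl fun j _ => ?_
    have : S j i = S i j := by conv_lhs => rw [← hS, Matrix.transpose_apply]
    rw [this]; ring
  rw [key] at h
  ext i j
  have h1 : ∀ i ∈ Finset.univ, (0:ℝ) ≤ ∑ j, S i j ^ 2 :=
    fun i _ => Finset.sum_nonneg fun j _ => sq_nonneg _
  have h2 := (Finset.sum_eq_zero_iff_of_nonneg h1).mp h i (Finset.mem_univ i)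
  have h3 := (Finset.sum_eq_zero_iff_of_nonneg
    (fun j _ => sq_nonneg (S i j))).mp h2 j (Finset.mem_univ j)
  simpa using pow_eq_zero_iff (n := 2) (by norm_num) |>.mp h3

theorem range_le (A : SymE →ₗ[ℝ] (Fin m → ℝ)) (Astar : (Fin m → ℝ) →ₗ[ℝ] SymE)
    (hadj : ∀ (Z : SymE) (v : Fin m → ℝ),
      (A Z) ⬝ᵥ v = ((Z : Mat) * ((Astar v : SymE) : Mat)).trace) :
    LinearMap.range Astar ≤ LinearMap.range (Astar ∘ₗ A) := by
  classical
  let e := (WithLp.linearEquiv 2 ℝ (Fin m → ℝ)).symm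
  let A' : SymE →ₗ[ℝ] EuclideanSpace ℝ (Fin m) := e.toLinearMap ∘ₗ A
  let K := LinearMap.range A'
  rintro _ ⟨v, rfl⟩
  obtain ⟨p, hp, w, hw, hv⟩ := K.exists_add_mem_mem_orthogonal (e v)
  obtain ⟨Z, hZ⟩ := hp
  have hwdot : ∀ Z' : SymE, (A Z') ⬝ᵥ (e.symm w) = 0 := by
    intro Z'
    have := hw (A' Z') ⟨Z', rfl⟩
    simpa [PiLp.inner_apply, A', e, dotProduct, mul_comm] using this
  have hSw : Astar (e.symm w) = 0 := by
    have hSsym : ((Astar (e.symm w) : SymE) : Mat)ᵀ = ((Astar (e.symm w) : SymE) : Mat) :=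
      coe_symm _
    have htr : (((Astar (e.symm w) : SymE) : Mat) * ((Astar (e.symm w) : SymE) : Mat)).trace
        = 0 := by
      have := hadj (Astar (e.symm w)) (e.symm w)
      rw [hwdot] at this
      exact this.symm
    exact Subtype.ext (trace_sq_eq_zero _ hSsym htr)
  refine ⟨Z, ?_⟩
  have hv' : v = A Z + e.symm w := by
    have : e.symm (e v) = e.symm (p + w) := congrArg e.symm (by rw [← hv])
    simpa [hZ.symm, A'] using this
  simp [hv', hSw]

theorem crit_iff (A : SymE →ₗ[ℝ] (Fin m → ℝ)) (Astar : (Fin m → ℝ) →ₗ[ℝ] SymE)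
    (hadj : ∀ (Z : SymE) (v : Fin m → ℝ),
      (A Z) ⬝ᵥ v = ((Z : Mat) * ((Astar v : SymE) : Mat)).trace)
    (y : Fin m → ℝ) (W : Mat) (hW : IsUnit W) :
    fderiv ℝ (sensingLoss A y) W = 0 ↔ Astar (A (symSq W) - y) = 0 := by
  have hdot : ∀ U : Mat, fderiv ℝ (sensingLoss A y) W U
      = 2 * (((phiMap W U : SymE) : Mat) * ((Astar (A (symSq W) - y) : SymE) : Mat)).trace := by
    intro U
    rw [fderiv_loss_apply]
    congr 1
    have h := hadj (phiMap W U) (A (symSq W) - y)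
    rw [← h]
    rfl
  constructor
  · intro h
    set Hm : Mat := ((Astar (A (symSq W) - y) : SymE) : Mat) with hHm
    have hsym : Hmᵀ = Hm := coe_symm _
    set U0 : Mat := (2⁻¹ : ℝ) • (Hm * (W⁻¹)ᵀ) with hU0
    have hφ : ((phiMap W U0 : SymE) : Mat) = Hm := by
      show W * U0ᵀ + U0 * Wᵀ = Hm
      exact part1 W hW Hm hsym
    have h0 : fderiv ℝ (sensingLoss A y) W U0 = 0 := by rw [h]; rfl
    rw [hdot U0, hφ] at h0
    have : (Hm * Hm).trace = 0 := by linarith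
    exact Subtype.ext (trace_sq_eq_zero Hm hsym this)
  · intro h
    apply ContinuousLinearMap.ext
    intro U
    rw [hdot U, h]
    simp

end Crit

section Manifold
variable {n m : ℕ}
local notation "Mat" => Matrix (Fin n) (Fin n) ℝ
local notation "SymE" => selfAdjoint.submodule ℝ (Matrix (Fin n) (Fin n) ℝ)

lemma isOpen_isUnit_matrix : IsOpen {W : Mat | IsUnit W} := by
  have hc : Continuous (Matrix.det : Mat → ℝ) := Continuous.matrix_det continuous_id
  have h : {W : Mat | IsUnit W} = Matrix.det ⁻¹' {x | x ≠ 0} := by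
    ext W; simp [Matrix.isUnit_iff_isUnit_det, isUnit_iff_ne_zero]
  rw [h]
  exact isOpen_ne.preimage hc

end Manifold

set_option synthInstance.maxHeartbeats 1000000 in
set_option maxHeartbeats 2000000 in
/-- (Matrix sensing.)  For invertible `W`, the map `φ(U) = W Uᵀ + U Wᵀ` is
surjective onto symmetric matrices (with explicit witness `U = ½ Z (W⁻¹)ᵀ`); for any linear
`𝒜` on symmetric matrices with adjoint `𝒜*`, the map `U ↦ 𝒜*(𝒜(W Uᵀ + U Wᵀ))` has rank equal
to the rank of `𝒜*𝒜`; and the set of invertible critical points of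
`F(W) = ‖𝒜(W Wᵀ) − y‖₂²` is a smooth manifold. -/
theorem matrix_sensing_invertible_critical_manifold
    {n m : ℕ} (W : Matrix (Fin n) (Fin n) ℝ) (hW : IsUnit W)
    (A : selfAdjoint.submodule ℝ (Matrix (Fin n) (Fin n) ℝ) →ₗ[ℝ] (Fin m → ℝ))
    (Astar : (Fin m → ℝ) →ₗ[ℝ] selfAdjoint.submodule ℝ (Matrix (Fin n) (Fin n) ℝ))
    (hadj : ∀ (Z : selfAdjoint.submodule ℝ (Matrix (Fin n) (Fin n) ℝ)) (v : Fin m → ℝ),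
      (A Z) ⬝ᵥ v = ((Z : Matrix (Fin n) (Fin n) ℝ) * ((Astar v : _) : Matrix (Fin n) (Fin n) ℝ)).trace)
    (y : Fin m → ℝ) :
    (∀ Z : Matrix (Fin n) (Fin n) ℝ, Zᵀ = Z →
      W * ((2⁻¹ : ℝ) • (Z * (W⁻¹)ᵀ))ᵀ + ((2⁻¹ : ℝ) • (Z * (W⁻¹)ᵀ)) * Wᵀ = Z) ∧
    (∀ Z : Matrix (Fin n) (Fin n) ℝ, Zᵀ = Z → ∃ U, W * Uᵀ + U * Wᵀ = Z) ∧
    Module.finrank ℝ (LinearMap.range ((Astar.comp A).comp (phiMap W)))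
      = Module.finrank ℝ (LinearMap.range (Astar.comp A)) ∧
    IsSmoothSubmanifold
      {W' : Matrix (Fin n) (Fin n) ℝ | IsUnit W' ∧ fderiv ℝ (sensingLoss A y) W' = 0} := by
  classical
  have hpart1 : ∀ Z : Matrix (Fin n) (Fin n) ℝ, Zᵀ = Z →
      W * ((2⁻¹ : ℝ) • (Z * (W⁻¹)ᵀ))ᵀ + ((2⁻¹ : ℝ) • (Z * (W⁻¹)ᵀ)) * Wᵀ = Z :=
    fun Z hZ => part1 W hW Z hZ
  refine ⟨hpart1, fun Z hZ => ⟨_, hpart1 Z hZ⟩, ?_, ?_⟩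
  · -- rank equality
    have hsurj : LinearMap.range (phiMap W) = ⊤ := by
      rw [LinearMap.range_eq_top]
      intro Z
      exact ⟨_, Subtype.ext (hpart1 (Z : Matrix (Fin n) (Fin n) ℝ) (coe_symm Z))⟩
    rw [LinearMap.range_comp, hsurj, Submodule.map_top]
  · -- smooth manifold
    intro x hx
    set V : Submodule ℝ (selfAdjoint.submodule ℝ (Matrix (Fin n) (Fin n) ℝ)) :=
      LinearMap.range Astar with hV
    set k := Module.finrank ℝ V with hkdef
    haveI : Module.Free ℝ V := Module.Free.of_divisionRing ℝ V
    haveI : Module.Finite ℝ V := Module.Finite.of_injective V.subtype Subtype.coe_injective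
    have hk : Module.finrank ℝ V = Module.finrank ℝ (EuclideanSpace ℝ (Fin k)) := by
      rw [finrank_euclideanSpace_fin]
    let e : V ≃ₗ[ℝ] EuclideanSpace ℝ (Fin k) := LinearEquiv.ofFinrankEq _ _ hk
    let Gmap : Matrix (Fin n) (Fin n) ℝ →ₗ[ℝ] V :=
      (Astar ∘ₗ (A ∘ₗ sLin n)).codRestrict V (fun X => ⟨A (sLin n X), rfl⟩)
    let T : Matrix (Fin n) (Fin n) ℝ →L[ℝ] EuclideanSpace ℝ (Fin k) :=
      LinearMap.toContinuousLinearMap (e.toLinearMap ∘ₗ Gmap)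
    let c : EuclideanSpace ℝ (Fin k) := e ⟨Astar y, ⟨y, rfl⟩⟩
    let f : Matrix (Fin n) (Fin n) ℝ → EuclideanSpace ℝ (Fin k) := fun X => T (X * Xᵀ) - c
    have hTapp : ∀ X, T X = e (Gmap X) := fun X => by
      simp [T]
    have hf0 : ∀ W' : Matrix (Fin n) (Fin n) ℝ, (f W' = 0 ↔ Astar (A (symSq W') - y) = 0) := by
      intro W'
      have h1 : f W' = 0 ↔ T (W' * W'ᵀ) = c := by
        constructor
        · intro h; have := sub_eq_zero.mp h; exact this
        · intro h; simp [f, h]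
      rw [h1, hTapp]
      have h2 : e (Gmap (W' * W'ᵀ)) = c ↔ Gmap (W' * W'ᵀ) = ⟨Astar y, ⟨y, rfl⟩⟩ := by
        constructor
        · intro h; exact e.injective h
        · intro h; rw [h]
      rw [h2]
      constructor
      · intro h
        have h3 := congrArg Subtype.val h
        have h4 : Astar (A (sLin n (W' * W'ᵀ))) = Astar y := h3
        rw [sLin_sq] at h4
        rw [map_sub, h4, sub_self]
      · intro h
        apply Subtype.ext
        show Astar (A (sLin n (W' * W'ᵀ))) = Astar y
        rw [sLin_sq]
        have h' := h
        rw [map_sub] at h'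
        exact sub_eq_zero.mp h' 
    refine ⟨k, {W' : Matrix (Fin n) (Fin n) ℝ | IsUnit W'}, f, isOpen_isUnit_matrix, hx.1,
      ?_, ?_, ?_⟩
    · exact ((T.contDiff.comp contDiff_sq).sub contDiff_const).contDiffOn
    · intro W' hW'
      simp only [Set.mem_setOf_eq] at hW' ⊢
      rw [hf0 W', ← crit_iff A Astar hadj y W' hW']
      exact ⟨fun h => h.2, fun h => ⟨hW', h⟩⟩
    · rintro W' ⟨hW'U, _⟩
      have hfd : fderiv ℝ f W' = T.comp (phiCLM W') := by
        have h1 : HasFDerivAt f (T.comp (phiCLM W')) W' :=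
          (T.hasFDerivAt.comp W' (hasFDerivAt_sq_s14 W')).sub_const c
        exact h1.fderiv
      intro ξ
      obtain ⟨Z, hZ⟩ := range_le A Astar hadj (e.symm ξ).2
      refine ⟨(2⁻¹ : ℝ) • ((Z : Matrix (Fin n) (Fin n) ℝ) * (W'⁻¹)ᵀ), ?_⟩
      erw [hfd]
      have hφ : phiCLM W' ((2⁻¹ : ℝ) • ((Z : Matrix (Fin n) (Fin n) ℝ) * (W'⁻¹)ᵀ))
          = (Z : Matrix (Fin n) (Fin n) ℝ) := by
        rw [phiCLM_apply]
        exact part1 W' hW'U _ (coe_symm Z)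
      show T (phiCLM W' _) = ξ
      rw [hφ, hTapp]
      have hGmap : Gmap (Z : Matrix (Fin n) (Fin n) ℝ) = e.symm ξ := by
        apply Subtype.ext
        show Astar (A (sLin n (Z : Matrix (Fin n) (Fin n) ℝ))) = ((e.symm ξ : V) : _)
        rw [sLin_coe]
        exact hZ
      rw [hGmap]
      simp
end
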